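/- arXiv:2401.18037 — 8 statements merged into one kernel-verified Lean document; each statement's English description precedes it below -/
import Mathlib

section
/- Let X be a Banach space with an FDD E, let θ_n = inf{ ‖∑_{k=1}^n y_k‖ : (y_k)_{k=1}^n E-block with ‖y_k‖ ≥ 1 } and q_∞ = limsup_n (log n / log θ_n). Then either q_∞ < ∞ or sup_n θ_n < ∞, and these two alternatives are mutually exclusive. -/
open Filter

variable {X : Type*} [NormedAddCommGroup X] [NormedSpace ℂ X]

/-- The set of values `‖∑ y_k‖` over `E`-block sequences of length `n`
(with respect to the FDD encoded by its partial-sum projections `S`)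
consisting of vectors of norm at least one; `θ_n` is its infimum. -/
def blockSumNorms (S : ℕ → X →L[ℂ] X) (n : ℕ) : Set ℝ :=
  { c | ∃ (y : Fin n → X) (a b : Fin n → ℕ),
      (∀ k, a k < b k) ∧
      (∀ (k : Fin n) (h : (k : ℕ) + 1 < n), b k ≤ a ⟨(k : ℕ) + 1, h⟩) ∧
      (∀ k, (S (b k) - S (a k)) (y k) = y k) ∧
      (∀ k, 1 ≤ ‖y k‖) ∧ c = ‖∑ k, y k‖ }

namespace BSNaux

variable (S : ℕ → X →L[ℂ] X)

lemma comp_apply (hSmul : ∀ m n, (S m).comp (S n) = S (min m n)) (m n : ℕ) (x : X) :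
    S m (S n x) = S (min m n) x := by
  have h := congrArg (fun T : X →L[ℂ] X => T x) (hSmul m n)
  simpa using h

lemma S_fix (hSmul : ∀ m n, (S m).comp (S n) = S (min m n)) {c d e : ℕ} {y : X}
    (hy : (S d - S c) y = y) (hde : d ≤ e) (hce : c ≤ e) : S e y = y := by
  have h1 : S e (S d y) = S d y := by rw [comp_apply S hSmul, min_eq_right hde]
  have h2 : S e (S c y) = S c y := by rw [comp_apply S hSmul, min_eq_right hce]
  calc S e y = S e ((S d - S c) y) := by rw [hy]
    _ = S d y - S c y := by simp [h1, h2]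
    _ = y := by simpa using hy

lemma S_kill (hSmul : ∀ m n, (S m).comp (S n) = S (min m n)) {c d e : ℕ} {y : X}
    (hy : (S d - S c) y = y) (hcd : c ≤ d) (hec : e ≤ c) : S e y = 0 := by
  have h1 : S e (S d y) = S e y := by rw [comp_apply S hSmul, min_eq_left (hec.trans hcd)]
  have h2 : S e (S c y) = S e y := by rw [comp_apply S hSmul, min_eq_left hec]
  calc S e y = S e ((S d - S c) y) := by rw [hy]
    _ = S e y - S e y := by simp [h1, h2]
    _ = 0 := sub_self _

lemma chainN {n : ℕ} {a b : ℕ → ℕ} (h1 : ∀ k < n, a k < b k)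
    (h2 : ∀ k, k + 1 < n → b k ≤ a (k + 1)) :
    ∀ j k, j < k → k < n → b j ≤ a k := by
  intro j k
  induction k with
  | zero => omega
  | succ k ih =>
    intro hjk hkn
    rcases Nat.lt_succ_iff_lt_or_eq.mp hjk with h | h
    · exact le_trans (ih h (by omega)) (le_trans (h1 k (by omega)).le (h2 k hkn))
    · subst h; exact h2 j hkn

lemma bmonoN {n : ℕ} {a b : ℕ → ℕ} (h1 : ∀ k < n, a k < b k)
    (h2 : ∀ k, k + 1 < n → b k ≤ a (k + 1)) :
    ∀ j k, j ≤ k → k < n → b j ≤ b k := by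
  intro j k hjk hkn
  rcases eq_or_lt_of_le hjk with h | h
  · subst h; exact le_rfl
  · exact le_trans (chainN h1 h2 j k h hkn) (h1 k hkn).le

lemma amonoN {n : ℕ} {a b : ℕ → ℕ} (h1 : ∀ k < n, a k < b k)
    (h2 : ∀ k, k + 1 < n → b k ≤ a (k + 1)) :
    ∀ j k, j ≤ k → k < n → a j ≤ a k := by
  intro j k hjk hkn
  rcases eq_or_lt_of_le hjk with h | h
  · subst h; exact le_rfl
  · exact le_trans (h1 j (lt_trans h hkn)).le (chainN h1 h2 j k h hkn)

lemma mem_bsn {n : ℕ} (y : ℕ → X) (a b : ℕ → ℕ)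
    (h1 : ∀ k < n, a k < b k) (h2 : ∀ k, k + 1 < n → b k ≤ a (k + 1))
    (h3 : ∀ k < n, (S (b k) - S (a k)) (y k) = y k)
    (h4 : ∀ k < n, 1 ≤ ‖y k‖) :
    ‖∑ k ∈ Finset.range n, y k‖ ∈ blockSumNorms S n := by
  refine ⟨fun k => y k, fun k => a k, fun k => b k, fun k => h1 k k.isLt,
    fun k h => h2 k h, fun k => h3 k k.isLt, fun k => h4 k k.isLt, ?_⟩
  rw [← Fin.sum_univ_eq_sum_range]

lemma bsn_elim {n : ℕ} {c : ℝ} (hc : c ∈ blockSumNorms S n) :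
    ∃ (y : ℕ → X) (a b : ℕ → ℕ),
      (∀ k < n, a k < b k) ∧ (∀ k, k + 1 < n → b k ≤ a (k + 1)) ∧
      (∀ k < n, (S (b k) - S (a k)) (y k) = y k) ∧ (∀ k < n, 1 ≤ ‖y k‖) ∧
      c = ‖∑ k ∈ Finset.range n, y k‖ := by
  obtain ⟨y, a, b, h1, h2, h3, h4, rfl⟩ := hc
  refine ⟨fun k => if h : k < n then y ⟨k, h⟩ else 0,
    fun k => if h : k < n then a ⟨k, h⟩ else 0,
    fun k => if h : k < n then b ⟨k, h⟩ else 0, ?_, ?_, ?_, ?_, ?_⟩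
  · intro k hk; simp only [dif_pos hk]; exact h1 _
  · intro k hk
    simp only [dif_pos hk, dif_pos (Nat.lt_of_succ_lt hk)]
    exact h2 ⟨k, Nat.lt_of_succ_lt hk⟩ hk
  · intro k hk; simp only [dif_pos hk]; exact h3 _
  · intro k hk; simp only [dif_pos hk]; exact h4 _
  · congr 1
    rw [← Fin.sum_univ_eq_sum_range]
    exact Finset.sum_congr rfl fun k _ => by simp [k.isLt]

lemma nonneg_of_mem {n : ℕ} {c : ℝ} (hc : c ∈ blockSumNorms S n) : 0 ≤ c := by
  obtain ⟨y, a, b, _, _, _, _, rfl⟩ := hc; exact norm_nonneg _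

lemma bddBelow_bsn (n : ℕ) : BddBelow (blockSumNorms S n) :=
  ⟨0, fun _ hc => nonneg_of_mem S hc⟩

lemma sInf_bsn_nonneg (n : ℕ) : 0 ≤ sInf (blockSumNorms S n) :=
  Real.sInf_nonneg (fun _ hc => nonneg_of_mem S hc)

lemma nonempty_mono {m n : ℕ} (hmn : m ≤ n) (h : (blockSumNorms S n).Nonempty) :
    (blockSumNorms S m).Nonempty := by
  obtain ⟨c, hc⟩ := h
  obtain ⟨y, a, b, h1, h2, h3, h4, rfl⟩ := bsn_elim S hc
  exact ⟨_, mem_bsn S y a b (fun k hk => h1 k (hk.trans_le hmn))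
    (fun k hk => h2 k (hk.trans_le hmn)) (fun k hk => h3 k (hk.trans_le hmn))
    (fun k hk => h4 k (hk.trans_le hmn))⟩

lemma one_le_sInf_one (h : (blockSumNorms S 1).Nonempty) : 1 ≤ sInf (blockSumNorms S 1) := by
  refine le_csInf h ?_
  intro c hc
  obtain ⟨y, a, b, h1, h2, h3, h4, rfl⟩ := bsn_elim S hc
  rw [Finset.sum_range_one]
  exact h4 0 one_pos



lemma sInf_le_K_mul (hSmul : ∀ m n, (S m).comp (S n) = S (min m n))
    {K : ℝ} (hK : ∀ n, ‖S n‖ ≤ K) (hKpos : 0 < K) {m n : ℕ}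
    (hm : 1 ≤ m) (hmn : m ≤ n) (hne : (blockSumNorms S n).Nonempty) :
    sInf (blockSumNorms S m) ≤ K * sInf (blockSumNorms S n) := by
  have h : sInf (blockSumNorms S m) / K ≤ sInf (blockSumNorms S n) := by
    refine le_csInf hne ?_
    intro c hc
    obtain ⟨y, a, b, h1, h2, h3, h4, rfl⟩ := bsn_elim S hc
    set B := b (m - 1) with hB
    have hm1n : m - 1 < n := by omega
    have key : S B (∑ k ∈ Finset.range n, y k) = ∑ k ∈ Finset.range m, y k := by
      rw [map_sum]
      rw [← Finset.sum_subset (Finset.range_subset_range.2 hmn) (fun k hk hk2 => ?_)]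
      · refine Finset.sum_congr rfl fun k hk => ?_
        rw [Finset.mem_range] at hk
        have hkn : k < n := hk.trans_le hmn
        have hbk : b k ≤ B := bmonoN h1 h2 k (m-1) (by omega) hm1n
        exact S_fix S hSmul (h3 k hkn) hbk (le_trans (h1 k hkn).le hbk)
      · rw [Finset.mem_range] at hk hk2
        push_neg at hk2
        have : B ≤ a k := chainN h1 h2 (m-1) k (by omega) hk
        exact S_kill S hSmul (h3 k hk) (h1 k hk).le this
    have hmem : ‖∑ k ∈ Finset.range m, y k‖ ∈ blockSumNorms S m :=
      mem_bsn S y a b (fun k hk => h1 k (hk.trans_le hmn))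
        (fun k hk => h2 k (hk.trans_le hmn)) (fun k hk => h3 k (hk.trans_le hmn))
        (fun k hk => h4 k (hk.trans_le hmn))
    have hle : sInf (blockSumNorms S m) ≤ ‖∑ k ∈ Finset.range m, y k‖ :=
      csInf_le (bddBelow_bsn S m) hmem
    have hnorm : ‖∑ k ∈ Finset.range m, y k‖ ≤ K * ‖∑ k ∈ Finset.range n, y k‖ := by
      rw [← key]
      calc ‖S B (∑ k ∈ Finset.range n, y k)‖ ≤ ‖S B‖ * ‖∑ k ∈ Finset.range n, y k‖ :=
            (S B).le_opNorm _
        _ ≤ K * ‖∑ k ∈ Finset.range n, y k‖ :=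
            mul_le_mul_of_nonneg_right (hK B) (norm_nonneg _)
    rw [div_le_iff₀ hKpos]
    calc sInf (blockSumNorms S m) ≤ K * ‖∑ k ∈ Finset.range n, y k‖ := hle.trans hnorm
      _ = ‖∑ k ∈ Finset.range n, y k‖ * K := mul_comm _ _
  calc sInf (blockSumNorms S m) = sInf (blockSumNorms S m) / K * K := by
        field_simp
    _ ≤ sInf (blockSumNorms S n) * K := mul_le_mul_of_nonneg_right h hKpos.le
    _ = K * sInf (blockSumNorms S n) := mul_comm _ _

lemma sum_grouped (y : ℕ → X) (n m : ℕ) :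
    ∑ j ∈ Finset.range n, ∑ i ∈ Finset.range m, y (j * m + i)
      = ∑ k ∈ Finset.range (n * m), y k := by
  induction n with
  | zero => simp
  | succ n ih =>
    rw [Finset.sum_range_succ, ih, Nat.succ_mul, Finset.sum_range_add]

lemma sInf_mul_le (hSmul : ∀ m n, (S m).comp (S n) = S (min m n)) {n m : ℕ}
    (hn : 1 ≤ n) (hm : 1 ≤ m)
    (hθm : 0 < sInf (blockSumNorms S m))
    (hne : (blockSumNorms S (n * m)).Nonempty) :
    sInf (blockSumNorms S n) * sInf (blockSumNorms S m) ≤ sInf (blockSumNorms S (n * m)) := by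
  set θm := sInf (blockSumNorms S m) with hθ
  refine le_csInf hne ?_
  intro c hc
  obtain ⟨y, a, b, h1, h2, h3, h4, rfl⟩ := bsn_elim S hc
  set z : ℕ → X := fun j => ∑ i ∈ Finset.range m, y (j * m + i) with hz
  set w : ℕ → X := fun j => ((θm⁻¹ : ℝ) : ℂ) • z j with hw
  have hidx : ∀ j i, j < n → i < m → j * m + i < n * m := by
    intro j i hj hi
    calc j * m + i < j * m + m := by omega
      _ = (j + 1) * m := (Nat.succ_mul j m).symm
      _ ≤ n * m := Nat.mul_le_mul_right m hj
  have hidx2 : ∀ j, j < n → j * m + (m - 1) < n * m := fun j hj => hidx j (m-1) hj (by omega)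
  have hzmem : ∀ j < n, ‖z j‖ ∈ blockSumNorms S m := by
    intro j hj
    exact mem_bsn S (fun i => y (j * m + i)) (fun i => a (j * m + i)) (fun i => b (j * m + i))
      (fun i hi => h1 _ (hidx j i hj hi))
      (fun i hi => by
        have := h2 (j * m + i) (by have := hidx j (i+1) hj hi; omega)
        simpa [add_assoc] using this)
      (fun i hi => h3 _ (hidx j i hj hi))
      (fun i hi => h4 _ (hidx j i hj hi))
  have hznorm : ∀ j < n, θm ≤ ‖z j‖ := fun j hj => csInf_le (bddBelow_bsn S m) (hzmem j hj)
  have hns : ‖((θm⁻¹ : ℝ) : ℂ)‖ = θm⁻¹ := by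
    rw [Complex.norm_real, Real.norm_eq_abs, abs_of_pos (inv_pos.2 hθm)]
  have hwnorm : ∀ j < n, 1 ≤ ‖w j‖ := by
    intro j hj
    have : ‖w j‖ = θm⁻¹ * ‖z j‖ := by
      rw [hw, norm_smul, hns]
    rw [this, inv_mul_eq_div, le_div_iff₀ hθm, one_mul]
    exact hznorm j hj
  have hwblock : ∀ j < n, (S (b (j * m + (m - 1))) - S (a (j * m))) (w j) = w j := by
    intro j hj
    rw [hw]
    rw [map_smul]
    congr 1
    rw [hz]
    simp only [ContinuousLinearMap.sub_apply] at *
    rw [map_sum, map_sum, ← Finset.sum_sub_distrib]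
    refine Finset.sum_congr rfl fun i hi => ?_
    rw [Finset.mem_range] at hi
    have hk : j * m + i < n * m := hidx j i hj hi
    have hb : b (j * m + i) ≤ b (j * m + (m - 1)) :=
      bmonoN h1 h2 _ _ (by omega) (hidx2 j hj)
    have ha : a (j * m) ≤ a (j * m + i) := amonoN h1 h2 _ _ (by omega) hk
    have e1 : S (b (j * m + (m - 1))) (y (j * m + i)) = y (j * m + i) :=
      S_fix S hSmul (h3 _ hk) hb (le_trans (h1 _ hk).le hb)
    have e2 : S (a (j * m)) (y (j * m + i)) = 0 :=
      S_kill S hSmul (h3 _ hk) (h1 _ hk).le ha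
    rw [e1, e2, sub_zero]
  have hwmem : ‖∑ j ∈ Finset.range n, w j‖ ∈ blockSumNorms S n := by
    refine mem_bsn S w (fun j => a (j * m)) (fun j => b (j * m + (m - 1))) ?_ ?_ hwblock hwnorm
    · intro j hj
      exact lt_of_lt_of_le (h1 _ (hidx j 0 hj hm)) (by simpa using bmonoN h1 h2 (j*m) (j*m+(m-1)) (by omega) (hidx2 j hj))
    · intro j hj
      have harr : j * m + (m - 1) + 1 = (j + 1) * m := by
        rw [Nat.succ_mul]; omega
      have := h2 (j * m + (m - 1)) (by rw [harr]; exact (Nat.mul_lt_mul_right (show 0 < m by omega)).2 hj)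
      rw [harr] at this
      exact this
  have hwsum : ∑ j ∈ Finset.range n, w j
      = ((θm⁻¹ : ℝ) : ℂ) • ∑ k ∈ Finset.range (n * m), y k := by
    rw [← sum_grouped y n m, Finset.smul_sum]
  have hθn : sInf (blockSumNorms S n) ≤ θm⁻¹ * ‖∑ k ∈ Finset.range (n * m), y k‖ := by
    have := csInf_le (bddBelow_bsn S n) hwmem
    rwa [hwsum, norm_smul, hns] at this
  calc sInf (blockSumNorms S n) * θm ≤ θm⁻¹ * ‖∑ k ∈ Finset.range (n * m), y k‖ * θm :=
        mul_le_mul_of_nonneg_right hθn hθm.le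
    _ = ‖∑ k ∈ Finset.range (n * m), y k‖ := by field_simp


lemma pow_le_sInf (hSmul : ∀ m n, (S m).comp (S n) = S (min m n))
    (hne : ∀ j, (blockSumNorms S j).Nonempty)
    (hθpos : ∀ j, 1 ≤ j → 0 < sInf (blockSumNorms S j))
    {n0 : ℕ} (hn0 : 2 ≤ n0) :
    ∀ k, (sInf (blockSumNorms S n0)) ^ k ≤ sInf (blockSumNorms S (n0 ^ k)) := by
  intro k
  induction k with
  | zero =>
    simpa using one_le_sInf_one S (hne 1)
  | succ k ih =>
    have h1k : 1 ≤ n0 ^ k := Nat.one_le_pow _ _ (by omega)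
    calc (sInf (blockSumNorms S n0)) ^ (k + 1)
        = (sInf (blockSumNorms S n0)) ^ k * sInf (blockSumNorms S n0) := pow_succ _ _
      _ ≤ sInf (blockSumNorms S (n0 ^ k)) * sInf (blockSumNorms S n0) :=
          mul_le_mul_of_nonneg_right ih (sInf_bsn_nonneg S n0)
      _ ≤ sInf (blockSumNorms S (n0 ^ k * n0)) :=
          sInf_mul_le S hSmul h1k (by omega) (hθpos n0 (by omega)) (hne _)
      _ = sInf (blockSumNorms S (n0 ^ (k + 1))) := by rw [pow_succ]

end BSNaux

/-- either `q_∞ = limsup_n (log n / log θ_n) < ∞` or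
`sup_n θ_n < ∞`, and these alternatives are mutually exclusive.
The condition `q_∞ < ∞` is rendered junk-value-free as
`∃ Q, eventually log n ≤ Q · log θ_n`. -/
theorem stmt_2 [CompleteSpace X]
    (S : ℕ → X →L[ℂ] X) (hS0 : S 0 = 0)
    (hSmul : ∀ m n, (S m).comp (S n) = S (min m n))
    (hStend : ∀ x : X, Tendsto (fun n => S n x) atTop (nhds x))
    (K : ℝ) (hK : ∀ n, ‖S n‖ ≤ K) :
    (∃ Q : ℝ, ∀ᶠ n : ℕ in atTop,
        Real.log n ≤ Q * Real.log (sInf (blockSumNorms S n))) ↔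
      ¬ BddAbove (Set.range fun n => sInf (blockSumNorms S n)) := by
  classical
  by_cases hne : ∀ j, (blockSumNorms S j).Nonempty
  · -- main case
    have hKpos : 0 < K := by
      obtain ⟨c1, hc1⟩ := hne 1
      obtain ⟨y, a, b, h1, h2, h3, h4, hcc⟩ := BSNaux.bsn_elim S hc1
      have hy0 : (S (b 0) - S (a 0)) (y 0) = y 0 := h3 0 one_pos
      have h5 : ‖y 0‖ ≤ ‖S (b 0) (y 0)‖ + ‖S (a 0) (y 0)‖ := by
        conv_lhs => rw [← hy0]
        simpa using norm_sub_le (S (b 0) (y 0)) (S (a 0) (y 0))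
      have h6 : ‖S (b 0) (y 0)‖ ≤ K * ‖y 0‖ :=
        ((S (b 0)).le_opNorm _).trans (mul_le_mul_of_nonneg_right (hK _) (norm_nonneg _))
      have h7 : ‖S (a 0) (y 0)‖ ≤ K * ‖y 0‖ :=
        ((S (a 0)).le_opNorm _).trans (mul_le_mul_of_nonneg_right (hK _) (norm_nonneg _))
      have h8 : 1 ≤ ‖y 0‖ := h4 0 one_pos
      nlinarith
    have hθlow : ∀ j, 1 ≤ j → 1 / K ≤ sInf (blockSumNorms S j) := by
      intro j hj
      have hmono := BSNaux.sInf_le_K_mul S hSmul hK hKpos le_rfl hj (hne j)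
      have h1' := BSNaux.one_le_sInf_one S (hne 1)
      rw [div_le_iff₀ hKpos]
      nlinarith
    have hθpos : ∀ j, 1 ≤ j → 0 < sInf (blockSumNorms S j) := by
      intro j hj
      exact lt_of_lt_of_le (by positivity) (hθlow j hj)
    constructor
    · rintro ⟨Q, hQ⟩ ⟨B, hB⟩
      rw [eventually_atTop] at hQ
      obtain ⟨N, hN⟩ := hQ
      set B' := max B 1 with hB'
      set C := |Q| * (|Real.log B'| + |Real.log K|) with hC
      set n := max (max N 1) (⌈Real.exp C⌉₊ + 1) with hn
      have hn1 : 1 ≤ n := le_trans (le_max_right N 1) (le_max_left _ _)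
      have hθn := hθlow n hn1
      have hθnpos : 0 < sInf (blockSumNorms S n) := hθpos n hn1
      have hub : sInf (blockSumNorms S n) ≤ B' :=
        le_trans (hB ⟨n, rfl⟩) (le_max_left _ _)
      have hlog_up : Real.log (sInf (blockSumNorms S n)) ≤ |Real.log B'| :=
        le_trans (Real.log_le_log hθnpos hub) (le_abs_self _)
      have hlog_dn : -|Real.log K| ≤ Real.log (sInf (blockSumNorms S n)) := by
        have h := Real.log_le_log (by positivity : (0:ℝ) < 1 / K) hθn
        rw [one_div, Real.log_inv] at h
        linarith [le_abs_self (Real.log K)]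
      have habs : |Real.log (sInf (blockSumNorms S n))| ≤ |Real.log B'| + |Real.log K| :=
        abs_le.2 ⟨by linarith [abs_nonneg (Real.log B')], by linarith [abs_nonneg (Real.log K)]⟩
      have h9 : Q * Real.log (sInf (blockSumNorms S n)) ≤ C := by
        calc Q * Real.log (sInf (blockSumNorms S n))
            ≤ |Q * Real.log (sInf (blockSumNorms S n))| := le_abs_self _
          _ = |Q| * |Real.log (sInf (blockSumNorms S n))| := abs_mul _ _
          _ ≤ C := by rw [hC]; exact mul_le_mul_of_nonneg_left habs (abs_nonneg Q)
      have h10 : Real.log n ≤ C :=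
        le_trans (hN n (le_trans (le_max_left N 1) (le_max_left _ _))) h9
      have h11 : Real.exp C < (n : ℝ) := by
        have h12 := Nat.le_ceil (Real.exp C)
        have h13 : (⌈Real.exp C⌉₊ + 1 : ℕ) ≤ n := le_max_right _ _
        have h14 : ((⌈Real.exp C⌉₊ + 1 : ℕ) : ℝ) ≤ (n : ℝ) := by exact_mod_cast h13
        push_cast at h14
        linarith
      have h15 : C < Real.log n :=
        (Real.lt_log_iff_exp_lt (by exact_mod_cast Nat.lt_of_lt_of_le Nat.zero_lt_one hn1)).2 h11
      linarith
    · intro hub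
      rw [not_bddAbove_iff] at hub
      set C0 := max (max (sInf (blockSumNorms S 0)) (sInf (blockSumNorms S 1)))
        (Real.exp 1 * max K 1) with hC0
      obtain ⟨t0, ⟨n0, ht0eq⟩, ht0⟩ := hub C0
      have htC : C0 < sInf (blockSumNorms S n0) := by rw [← ht0eq] at ht0; exact ht0
      have hKm1 : (1:ℝ) ≤ max K 1 := le_max_right _ _
      have hemK : (0:ℝ) < Real.exp 1 * max K 1 :=
        mul_pos (Real.exp_pos 1) (lt_of_lt_of_le one_pos hKm1)
      have hn0 : 2 ≤ n0 := by
        by_contra h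
        push_neg at h
        have h01 : n0 = 0 ∨ n0 = 1 := by omega
        rcases h01 with rfl | rfl
        · exact absurd htC (not_lt.2 ((le_max_left _ _).trans (le_max_left _ _)))
        · exact absurd htC (not_lt.2 ((le_max_right _ _).trans (le_max_left _ _)))
      set t := sInf (blockSumNorms S n0) with ht
      have htpos : 0 < t := lt_of_le_of_lt (le_trans hemK.le (le_max_right _ _)) htC
      have hlogt : 1 + Real.log (max K 1) ≤ Real.log t := by
        have h := Real.log_le_log hemK (le_of_lt (lt_of_le_of_lt (le_max_right _ _) htC))
        rwa [Real.log_mul (Real.exp_ne_zero 1) (by linarith), Real.log_exp] at h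
      have hlogK : Real.log K ≤ Real.log (max K 1) := Real.log_le_log hKpos (le_max_left _ _)
      have hlogn0 : 0 < Real.log n0 := Real.log_pos (by exact_mod_cast hn0)
      refine ⟨2 * Real.log n0, ?_⟩
      rw [eventually_atTop]
      refine ⟨n0, fun m hm => ?_⟩
      set k := Nat.log n0 m with hk
      have hk1 : 1 ≤ k := Nat.log_pos (by omega) hm
      have hpowle : n0 ^ k ≤ m := Nat.pow_log_le_self n0 (by omega)
      have hlt : m < n0 ^ (k + 1) := Nat.lt_pow_succ_log_self (by omega) m
      have hpow := BSNaux.pow_le_sInf S hSmul hne hθpos hn0 k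
      have hmono := BSNaux.sInf_le_K_mul S hSmul hK hKpos
        (Nat.one_le_pow _ _ (by omega)) hpowle (hne m)
      set θm := sInf (blockSumNorms S m) with hθm
      have hθmpos : 0 < θm := hθpos m (by omega)
      have htk : t ^ k ≤ K * θm := le_trans hpow hmono
      have hlogθm : (k : ℝ) * Real.log t - Real.log K ≤ Real.log θm := by
        have h0 : (0:ℝ) < t ^ k / K := by positivity
        have h1 : t ^ k / K ≤ θm := by rw [div_le_iff₀ hKpos]; linarith [mul_comm K θm]
        have h2 := Real.log_le_log h0 h1
        rwa [Real.log_div (by positivity) (ne_of_gt hKpos), Real.log_pow] at h2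
      have hkk : (1:ℝ) ≤ (k:ℝ) := by exact_mod_cast hk1
      have hprod : 0 ≤ ((k:ℝ) - 1) * (Real.log t - 1) :=
        mul_nonneg (by linarith) (by linarith [Real.log_nonneg hKm1])
      have hklog : (k:ℝ) ≤ Real.log θm := by
        nlinarith [hlogθm, hlogt, hlogK, Real.log_nonneg hKm1, hprod]
      have hm0 : (0:ℝ) < (m:ℝ) := by exact_mod_cast Nat.lt_of_lt_of_le Nat.zero_lt_one (by omega)
      have hlogm : Real.log m ≤ ((k:ℝ) + 1) * Real.log n0 := by
        have hcast : (m:ℝ) ≤ (n0:ℝ) ^ (k + 1) := by exact_mod_cast hlt.le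
        calc Real.log m ≤ Real.log ((n0:ℝ) ^ (k + 1)) := Real.log_le_log hm0 hcast
          _ = ((k:ℝ) + 1) * Real.log n0 := by rw [Real.log_pow]; push_cast; ring
      calc Real.log m ≤ ((k:ℝ) + 1) * Real.log n0 := hlogm
        _ ≤ (2 * (k:ℝ)) * Real.log n0 :=
            mul_le_mul_of_nonneg_right (by linarith) hlogn0.le
        _ = 2 * Real.log n0 * (k:ℝ) := by ring
        _ ≤ 2 * Real.log n0 * Real.log θm :=
            mul_le_mul_of_nonneg_left hklog (by positivity)
  · push_neg at hne
    obtain ⟨N, hN⟩ := hne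
    have hzero : ∀ n, N ≤ n → sInf (blockSumNorms S n) = 0 := by
      intro n hn
      have hemp : ¬ (blockSumNorms S n).Nonempty := by
        intro h
        have := BSNaux.nonempty_mono S hn h
        rw [hN] at this
        exact Set.not_nonempty_empty this
      rw [Set.not_nonempty_iff_eq_empty] at hemp
      rw [hemp, Real.sInf_empty]
    have hBdd : BddAbove (Set.range fun n => sInf (blockSumNorms S n)) := by
      refine ⟨∑ i ∈ Finset.range (N + 1), |sInf (blockSumNorms S i)|, ?_⟩
      rintro x ⟨n, rfl⟩
      show sInf (blockSumNorms S n) ≤ _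
      by_cases hn : n ≤ N
      · calc sInf (blockSumNorms S n) ≤ |sInf (blockSumNorms S n)| := le_abs_self _
          _ ≤ ∑ i ∈ Finset.range (N + 1), |sInf (blockSumNorms S i)| :=
            Finset.single_le_sum (f := fun i => |sInf (blockSumNorms S i)|)
              (fun i _ => abs_nonneg _) (Finset.mem_range.2 (Nat.lt_succ_of_le hn))
      · rw [hzero n (le_of_not_ge hn)]
        exact Finset.sum_nonneg fun i _ => abs_nonneg _
    refine iff_of_false ?_ (not_not_intro hBdd)
    rintro ⟨Q, hQ⟩
    rw [eventually_atTop] at hQ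
    obtain ⟨N', hN'⟩ := hQ
    set n := max (max N N') 3 with hn
    have h1 := hN' n (le_trans (le_max_right N N') (le_max_left _ _))
    rw [hzero n (le_trans (le_max_left N N') (le_max_left _ _)), Real.log_zero, mul_zero] at h1
    have h3 : (3:ℕ) ≤ n := le_max_right _ _
    have h4 : (1:ℝ) < (n:ℝ) := by exact_mod_cast (by omega : 1 < n)
    linarith [Real.log_pos h4]
end

section
/- Let X be a Banach space with the λ-bounded approximation property and T ∈ L(X). Define |T| = sup{ liminf_i liminf_j ‖T x_i − T x_j‖ : (x_i) a sequence in the unit ball of X }. Then |·| is a seminorm on L(X) satisfying (1+λ)^{-2} · dist(T, K(X)) ≤ |T| ≤ 2 · dist(T, K(X)), where K(X) denotes the compact operators and dist is the operator-norm distance. -/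
/-!
Upper bound: if `K` is compact, then along a subsequence on which `K x_i` converges,
`‖T x_i - T x_j‖ ≤ 2 ‖T - K‖ + o(1)`; passing to a subsequence can only increase the iterated
`liminf`, so `|T| ≤ 2 ‖T - K‖`.

Lower bound: `T - (1 - F) T (1 - F)` is compact for finite-rank `F`, so `(1 - F) T (1 - F)` has
norm at least `d = dist(T, K(X))`. Given finitely many points `T x_m`, take `F` with `‖F‖ ≤ λ`
almost fixing them and `z` almost norming `(1 - F) T (1 - F)`; then `x = (1 + λ)⁻¹ (z - F z)` lies
in the unit ball and `T x` is almost `(1 + λ)⁻² d` away from every `T x_m`, because `1 - F` has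
norm at most `1 + λ`, almost kills the `T x_m` and not `T x`. Adding such points one at a time
gives a sequence on which `|T|` is almost `(1 + λ)⁻² d`.

Subadditivity: on a subsequence along which the inner `liminf`s for `T` and `S` and then the outer
ones are limits (compactness of `([0, M]²)^ℕ`), these limits add.
-/

open Filter

variable {X : Type*} [NormedAddCommGroup X] [NormedSpace ℂ X]

/-- `|T| = sup { liminf_i liminf_j ‖T x_i − T x_j‖ : (x_i) ⊆ B_X }`. -/
noncomputable def opSemi (T : X →L[ℂ] X) : ℝ :=
  sSup { c : ℝ | ∃ x : ℕ → X, (∀ i, ‖x i‖ ≤ 1) ∧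
    c = liminf (fun i => liminf (fun j => ‖T (x i) - T (x j)‖) atTop) atTop }

/-- distance to the ideal of compact operators -/
noncomputable def distK (T : X →L[ℂ] X) : ℝ :=
  Metric.infDist T {S : X →L[ℂ] X | IsCompactOperator (⇑S)}

open Topology Set

section Liminf

variable {u v : ℕ → ℝ} {m M : ℝ}

lemma liminf_mem_Icc (hu : ∀ n, u n ∈ Icc m M) : liminf u atTop ∈ Icc m M :=
  ⟨le_liminf_of_le (isBoundedUnder_of ⟨M, fun n => (hu n).2⟩).isCoboundedUnder_ge
      (.of_forall fun n => (hu n).1),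
    liminf_le_of_frequently_le (.of_forall fun n => (hu n).2)
      (isBoundedUnder_of ⟨m, fun n => (hu n).1⟩)⟩

lemma liminf_le_liminf_of_forall_le (hu : ∀ n, m ≤ u n) (hv : ∀ n, v n ≤ M)
    (h : ∀ n, u n ≤ v n) : liminf u atTop ≤ liminf v atTop :=
  liminf_le_liminf (.of_forall h) (isBoundedUnder_of ⟨m, hu⟩)
    (isBoundedUnder_of ⟨M, hv⟩).isCoboundedUnder_ge

lemma liminf_le_liminf_comp (hu : ∀ n, u n ∈ Icc m M) {φ : ℕ → ℕ}
    (hφ : Tendsto φ atTop atTop) : liminf u atTop ≤ liminf (u ∘ φ) atTop :=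
  liminf_le_liminf_of_le hφ (isBoundedUnder_of ⟨m, fun n => (hu n).1⟩)
    (isBoundedUnder_of ⟨M, fun n => (hu (φ n)).2⟩).isCoboundedUnder_ge

lemma liminf_const_mul {r : ℝ} (hr : 0 ≤ r) (hu : ∀ n, u n ∈ Icc m M) :
    liminf (fun n => r * u n) atTop = r * liminf u atTop :=
  ((monotone_mul_left_of_nonneg hr).map_liminf_of_continuousAt u
    (continuous_const_mul r).continuousAt
    (isBoundedUnder_of ⟨M, fun n => (hu n).2⟩).isCoboundedUnder_ge
    (isBoundedUnder_of ⟨m, fun n => (hu n).1⟩)).symm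

end Liminf

noncomputable def dblLiminf (u : ℕ → ℕ → ℝ) : ℝ :=
  liminf (fun i => liminf (u i) atTop) atTop

section DblLiminf

variable {u v : ℕ → ℕ → ℝ} {m M m' M' : ℝ}

lemma dblLiminf_mem_Icc (hu : ∀ i j, u i j ∈ Icc m M) : dblLiminf u ∈ Icc m M :=
  liminf_mem_Icc fun i => liminf_mem_Icc (hu i)

lemma dblLiminf_mono (hu : ∀ i j, u i j ∈ Icc m M) (hv : ∀ i j, v i j ∈ Icc m' M')
    (h : ∀ i j, u i j ≤ v i j) : dblLiminf u ≤ dblLiminf v :=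
  liminf_le_liminf_of_forall_le (fun i => (liminf_mem_Icc (hu i)).1)
    (fun i => (liminf_mem_Icc (hv i)).2)
    fun i => liminf_le_liminf_of_forall_le (fun j => (hu i j).1) (fun j => (hv i j).2) (h i)

lemma dblLiminf_le_comp (hu : ∀ i j, u i j ∈ Icc m M) {φ : ℕ → ℕ}
    (hφ : Tendsto φ atTop atTop) : dblLiminf u ≤ dblLiminf fun k l => u (φ k) (φ l) :=
  (liminf_le_liminf_comp (fun i => liminf_mem_Icc (hu i)) hφ).trans <|
    liminf_le_liminf_of_forall_le (fun k => (liminf_mem_Icc (hu (φ k))).1)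
      (fun k => (liminf_mem_Icc fun l => hu (φ k) (φ l)).2)
      fun k => liminf_le_liminf_comp (hu (φ k)) hφ

lemma dblLiminf_eq_of_tendsto {α : ℕ → ℝ} {A : ℝ} (hα : ∀ i, Tendsto (u i) atTop (𝓝 (α i)))
    (hA : Tendsto α atTop (𝓝 A)) : dblLiminf u = A := by
  simp only [dblLiminf, fun i => (hα i).liminf_eq, hA.liminf_eq]

lemma dblLiminf_const_mul {r : ℝ} (hr : 0 ≤ r) (hu : ∀ i j, u i j ∈ Icc m M) :
    dblLiminf (fun i j => r * u i j) = r * dblLiminf u := by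
  simp only [dblLiminf, liminf_const_mul hr (hu _)]
  exact liminf_const_mul hr fun i => liminf_mem_Icc (hu i)

lemma le_dblLiminf_of_forall_lt {c : ℝ} (hu : ∀ i j, u i j ∈ Icc m M)
    (h : ∀ i j, i < j → c ≤ u i j) : c ≤ dblLiminf u :=
  le_liminf_of_le
    (isBoundedUnder_of ⟨M, fun i => (liminf_mem_Icc (hu i)).2⟩).isCoboundedUnder_ge
    (.of_forall fun i => le_liminf_of_le
      (isBoundedUnder_of ⟨M, fun j => (hu i j).2⟩).isCoboundedUnder_ge
      ((eventually_gt_atTop i).mono (h i)))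

end DblLiminf

/-- The diagonal argument, done by sequential compactness of the countable product `K^ℕ`. -/
lemma IsCompact.exists_strictMono_tendsto_tendsto {E : Type*} [TopologicalSpace E]
    [FirstCountableTopology E] {K : Set E} (hK : IsCompact K) {u : ℕ → ℕ → E}
    (hu : ∀ i j, u i j ∈ K) :
    ∃ φ : ℕ → ℕ, StrictMono φ ∧ ∃ (α : ℕ → E) (A : E),
      (∀ k, Tendsto (fun l => u (φ k) (φ l)) atTop (𝓝 (α k))) ∧ Tendsto α atTop (𝓝 A) := by
  obtain ⟨α, hαK, φ, hφ, hrows⟩ := (isCompact_univ_pi fun _ : ℕ => hK).tendsto_subseq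
    (x := fun j i => u i j) fun j => mem_univ_pi.2 fun i => hu i j
  obtain ⟨A, -, ψ, hψ, hA⟩ := hK.tendsto_subseq (x := α ∘ φ) fun k => mem_univ_pi.1 hαK _
  exact ⟨φ ∘ ψ, hφ.comp hψ, α ∘ φ ∘ ψ, A,
    fun k => (tendsto_pi_nhds.1 hrows _).comp hψ.tendsto_atTop, hA⟩

lemma isCompactOperator_of_finiteDimensional_range {𝕜 E F : Type*} [NontriviallyNormedField 𝕜]
    [LocallyCompactSpace 𝕜] [NormedAddCommGroup E] [NormedSpace 𝕜 E] [NormedAddCommGroup F]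
    [NormedSpace 𝕜 F] {f : E →L[𝕜] F}
    (hf : FiniteDimensional 𝕜 (LinearMap.range (f : E →ₗ[𝕜] F))) : IsCompactOperator f := by
  have : ProperSpace (LinearMap.range (f : E →ₗ[𝕜] F)) := FiniteDimensional.proper 𝕜 _
  exact (isCompactOperator_of_locallyCompactSpace_dom
    (f.codRestrict _ fun x => LinearMap.mem_range_self _ x)).clm_comp (Submodule.subtypeL _)

lemma norm_sub_apply_le {𝕜 E : Type*} [NontriviallyNormedField 𝕜] [SeminormedAddCommGroup E]
    [NormedSpace 𝕜 E] {F : E →L[𝕜] E} {lam : ℝ} (hF : ‖F‖ ≤ lam) (v : E) :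
    ‖v - F v‖ ≤ (1 + lam) * ‖v‖ :=
  calc ‖v - F v‖ ≤ ‖v‖ + ‖F‖ * ‖v‖ := (norm_sub_le _ _).trans (by gcongr; exact F.le_opNorm v)
    _ ≤ (1 + lam) * ‖v‖ := by nlinarith [norm_nonneg v]

lemma distK_le_norm_one_sub_mul_mul {F : X →L[ℂ] X} (hF : IsCompactOperator F)
    (T : X →L[ℂ] X) : distK T ≤ ‖(1 - F) * T * (1 - F)‖ := by
  have hK : IsCompactOperator ⇑(F * T + T * F - F * T * F) := by
    simp only [FunLike.coe_sub, FunLike.coe_add]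
    exact ((hF.comp_clm T).add (hF.clm_comp T)).sub ((hF.comp_clm T).comp_clm F)
  calc distK T ≤ dist T (F * T + T * F - F * T * F) := Metric.infDist_le_dist_of_mem hK
    _ = ‖(1 - F) * T * (1 - F)‖ := by rw [dist_eq_norm]; congr 1; noncomm_ring

noncomputable def seqSemi (T : X →L[ℂ] X) (x : ℕ → X) : ℝ :=
  dblLiminf fun i j => ‖T (x i) - T (x j)‖

section SeqSemi

variable {T S : X →L[ℂ] X} {x : ℕ → X}

lemma norm_apply_sub_apply_mem_Icc (T : X →L[ℂ] X) (hx : ∀ i, ‖x i‖ ≤ 1) (i j : ℕ) :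
    ‖T (x i) - T (x j)‖ ∈ Icc 0 (2 * ‖T‖) := by
  refine ⟨norm_nonneg _, (norm_sub_le _ _).trans ?_⟩
  have hi := T.le_opNorm_of_le (hx i)
  have hj := T.le_opNorm_of_le (hx j)
  rw [mul_one] at hi hj
  linarith

lemma seqSemi_mem_Icc (hx : ∀ i, ‖x i‖ ≤ 1) : seqSemi T x ∈ Icc 0 (2 * ‖T‖) :=
  dblLiminf_mem_Icc (norm_apply_sub_apply_mem_Icc T hx)

lemma opSemi_eq_sSup_image (T : X →L[ℂ] X) :
    opSemi T = sSup (seqSemi T '' {x | ∀ i, ‖x i‖ ≤ 1}) := by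
  simp only [opSemi, seqSemi, dblLiminf, image, mem_ofPred_eq, eq_comm]

lemma seqSemi_le_opSemi (hx : ∀ i, ‖x i‖ ≤ 1) : seqSemi T x ≤ opSemi T := by
  rw [opSemi_eq_sSup_image]
  exact le_csSup ⟨2 * ‖T‖, forall_mem_image.2 fun y hy => (seqSemi_mem_Icc hy).2⟩
    (mem_image_of_mem _ hx)

lemma opSemi_le {c : ℝ} (h : ∀ x : ℕ → X, (∀ i, ‖x i‖ ≤ 1) → seqSemi T x ≤ c) :
    opSemi T ≤ c := by
  rw [opSemi_eq_sSup_image]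
  exact csSup_le ⟨_, mem_image_of_mem _ fun _ => norm_zero.le.trans zero_le_one⟩
    (forall_mem_image.2 h)

lemma seqSemi_le_comp (hx : ∀ i, ‖x i‖ ≤ 1) {φ : ℕ → ℕ} (hφ : Tendsto φ atTop atTop) :
    seqSemi T x ≤ seqSemi T (x ∘ φ) :=
  dblLiminf_le_comp (norm_apply_sub_apply_mem_Icc T hx) hφ

lemma seqSemi_smul (c : ℂ) (hx : ∀ i, ‖x i‖ ≤ 1) : seqSemi (c • T) x = ‖c‖ * seqSemi T x := by
  simp only [seqSemi, smul_apply, ← smul_sub, norm_smul]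
  exact dblLiminf_const_mul (norm_nonneg c) (norm_apply_sub_apply_mem_Icc T hx)

lemma opSemi_smul (c : ℂ) (T : X →L[ℂ] X) : opSemi (c • T) = ‖c‖ * opSemi T := by
  rw [opSemi_eq_sSup_image, opSemi_eq_sSup_image, ← smul_eq_mul,
    ← Real.sSup_smul_of_nonneg (norm_nonneg c), ← image_smul, image_image]
  exact congrArg sSup (image_congr fun x hx => seqSemi_smul c hx)

lemma seqSemi_add_le (hx : ∀ i, ‖x i‖ ≤ 1) : seqSemi (T + S) x ≤ opSemi T + opSemi S := by
  obtain ⟨φ, hφ, α, A, hα, hA⟩ :=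
    (isCompact_closedBall (0 : ℝ × ℝ) (2 * ‖T‖ + 2 * ‖S‖)).exists_strictMono_tendsto_tendsto
      (u := fun i j => (‖T (x i) - T (x j)‖, ‖S (x i) - S (x j)‖)) fun i j => by
        have hT := norm_apply_sub_apply_mem_Icc T hx i j
        have hS := norm_apply_sub_apply_mem_Icc S hx i j
        simp only [mem_closedBall_zero_iff, Prod.norm_def, norm_norm, max_le_iff]
        constructor <;> linarith [hT.2, hS.2, norm_nonneg T, norm_nonneg S]
  have hy : ∀ i, ‖(x ∘ φ) i‖ ≤ 1 := fun i => hx (φ i)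
  calc seqSemi (T + S) x ≤ seqSemi (T + S) (x ∘ φ) := seqSemi_le_comp hx hφ.tendsto_atTop
    _ ≤ dblLiminf fun k l => ‖T (x (φ k)) - T (x (φ l))‖ + ‖S (x (φ k)) - S (x (φ l))‖ := by
      refine dblLiminf_mono (norm_apply_sub_apply_mem_Icc _ hy)
        (fun k l => ⟨add_nonneg (norm_nonneg _) (norm_nonneg _),
          add_le_add (norm_apply_sub_apply_mem_Icc T hy k l).2
            (norm_apply_sub_apply_mem_Icc S hy k l).2⟩) fun k l => ?_
      simp only [Function.comp_apply, add_apply, add_sub_add_comm]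
      exact norm_add_le _ _
    _ = seqSemi T (x ∘ φ) + seqSemi S (x ∘ φ) := by
      have hT : seqSemi T (x ∘ φ) = A.1 :=
        dblLiminf_eq_of_tendsto (fun k => (hα k).fst_nhds) hA.fst_nhds
      have hS : seqSemi S (x ∘ φ) = A.2 :=
        dblLiminf_eq_of_tendsto (fun k => (hα k).snd_nhds) hA.snd_nhds
      rw [hT, hS]
      exact dblLiminf_eq_of_tendsto (fun k => (hα k).fst_nhds.add (hα k).snd_nhds)
        (hA.fst_nhds.add hA.snd_nhds)
    _ ≤ opSemi T + opSemi S := add_le_add (seqSemi_le_opSemi hy) (seqSemi_le_opSemi hy)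

lemma opSemi_add_le (T S : X →L[ℂ] X) : opSemi (T + S) ≤ opSemi T + opSemi S :=
  opSemi_le fun _ hx => seqSemi_add_le hx

lemma seqSemi_le_two_mul_norm_sub {K : X →L[ℂ] X} (hK : IsCompactOperator K)
    (hx : ∀ i, ‖x i‖ ≤ 1) : seqSemi T x ≤ 2 * ‖T - K‖ := by
  obtain ⟨C, hC, hKC⟩ :=
    hK.image_subset_compact_of_bounded (Metric.isBounded_closedBall (x := (0 : X)) (r := 1))
  obtain ⟨z, -, φ, hφ, hz⟩ := hC.tendsto_subseq (x := fun n => K (x n))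
    fun n => hKC ⟨x n, mem_closedBall_zero_iff.2 (hx n), rfl⟩
  have hy : ∀ i, ‖(x ∘ φ) i‖ ≤ 1 := fun i => hx (φ i)
  calc seqSemi T x ≤ seqSemi T (x ∘ φ) := seqSemi_le_comp hx hφ.tendsto_atTop
    _ ≤ dblLiminf fun k l => 2 * ‖T - K‖ + ‖K (x (φ k)) - K (x (φ l))‖ := by
      refine dblLiminf_mono (norm_apply_sub_apply_mem_Icc _ hy)
        (fun k l => ⟨by positivity,
          add_le_add_right (norm_apply_sub_apply_mem_Icc K hy k l).2 _⟩)
        fun k l => ?_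
      have hD := (norm_apply_sub_apply_mem_Icc (T - K) hy k l).2
      simp only [Function.comp_apply, sub_apply] at hD ⊢
      calc ‖T (x (φ k)) - T (x (φ l))‖
          = ‖(T (x (φ k)) - K (x (φ k)) - (T (x (φ l)) - K (x (φ l))))
              + (K (x (φ k)) - K (x (φ l)))‖ := by congr 1; abel
        _ ≤ _ := (norm_add_le _ _).trans (by gcongr)
    _ = 2 * ‖T - K‖ := dblLiminf_eq_of_tendsto
      (fun k => tendsto_const_nhds.add ((hz.const_sub _).norm))
      (by simpa using tendsto_const_nhds.add ((hz.sub_const z).norm))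

lemma opSemi_le_two_mul_distK (T : X →L[ℂ] X) : opSemi T ≤ 2 * distK T := by
  rw [← div_le_iff₀' two_pos, distK, Metric.le_infDist ⟨0, isCompactOperator_zero⟩]
  intro K hK
  rw [div_le_iff₀' two_pos, dist_eq_norm]
  exact opSemi_le fun x hx => seqSemi_le_two_mul_norm_sub hK hx

end SeqSemi

variable (X) in
def HasBoundedApproxProperty (lam : ℝ) : Prop :=
  ∀ (s : Finset X) (ε : ℝ), 0 < ε → ∃ F : X →L[ℂ] X,
    FiniteDimensional ℂ (LinearMap.range (F : X →ₗ[ℂ] X)) ∧ ‖F‖ ≤ lam ∧ ∀ x ∈ s, ‖F x - x‖ < ε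

section LowerBound

variable {lam : ℝ}

lemma exists_norm_le_one_forall_le_norm_apply_sub (hlam : 0 ≤ lam)
    (hBAP : HasBoundedApproxProperty X lam) (T : X →L[ℂ] X) {c : ℝ}
    (hc : c < ((1 + lam)⁻¹) ^ 2 * distK T) (S : Finset X) :
    ∃ x : X, ‖x‖ ≤ 1 ∧ ∀ y ∈ S, c ≤ ‖T x - y‖ := by
  set s := (1 + lam)⁻¹
  have hs : 0 < s := by positivity
  set ε := (s ^ 2 * distK T - c) / (s * (s + 1))
  have hε : 0 < ε := div_pos (by linarith) (by positivity)
  have hεc : s * (s + 1) * ε = s ^ 2 * distK T - c := mul_div_cancel₀ _ (by positivity)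
  obtain ⟨F, hFfin, hFlam, hFS⟩ := hBAP S ε hε
  set A := (1 - F) * T * (1 - F)
  have hdA : distK T ≤ ‖A‖ :=
    distK_le_norm_one_sub_mul_mul (isCompactOperator_of_finiteDimensional_range hFfin) T
  obtain ⟨z, hz, hAz⟩ := A.exists_lt_apply_of_lt_opNorm (sub_lt_self ‖A‖ hε)
  have hsl : s * (1 + lam) = 1 := inv_mul_cancel₀ (by positivity)
  refine ⟨s • (z - F z), ?_, fun y hy => ?_⟩
  · calc ‖s • (z - F z)‖ ≤ s * ((1 + lam) * ‖z‖) := by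
          rw [norm_smul, Real.norm_of_nonneg hs.le]; gcongr; exact norm_sub_apply_le hFlam z
      _ ≤ 1 := by rw [← mul_assoc, hsl, one_mul]; exact hz.le
  have hTx : T (s • (z - F z)) - F (T (s • (z - F z))) = s • A z := by
    simp [A, smul_sub]
  calc c = s * (s * (distK T - ε) - ε) := by linear_combination hεc
    _ ≤ s * (‖T (s • (z - F z)) - F (T (s • (z - F z)))‖ - ‖y - F y‖) := by
      rw [hTx, norm_smul, Real.norm_of_nonneg hs.le, ← norm_neg (y - F y), neg_sub]
      gcongr
      · linarith
      · exact (hFS y hy).le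
    _ ≤ s * ‖(T (s • (z - F z)) - y) - F (T (s • (z - F z)) - y)‖ := by
      gcongr
      refine (norm_sub_norm_le _ _).trans_eq (congrArg norm ?_)
      rw [map_sub]; abel
    _ ≤ s * ((1 + lam) * ‖T (s • (z - F z)) - y‖) := by gcongr; exact norm_sub_apply_le hFlam _
    _ = ‖T (s • (z - F z)) - y‖ := by rw [← mul_assoc, hsl, one_mul]

lemma inv_one_add_sq_mul_distK_le_opSemi (hlam : 0 ≤ lam)
    (hBAP : HasBoundedApproxProperty X lam) (T : X →L[ℂ] X) :
    ((1 + lam)⁻¹) ^ 2 * distK T ≤ opSemi T := by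
  classical
  refine le_of_forall_lt_imp_le_of_dense fun c hc => ?_
  obtain ⟨x, hx, hsep⟩ := exists_seq_of_forall_finset_exists (fun x : X => ‖x‖ ≤ 1)
    (fun a b => c ≤ ‖T a - T b‖) fun S _ => by
      obtain ⟨y, hy, hfar⟩ :=
        exists_norm_le_one_forall_le_norm_apply_sub hlam hBAP T hc (S.image T)
      exact ⟨y, hy, fun a ha => norm_sub_rev (T y) (T a) ▸ hfar _ (Finset.mem_image_of_mem T ha)⟩
  exact (le_dblLiminf_of_forall_lt (norm_apply_sub_apply_mem_Icc T hx) hsep).trans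
    (seqSemi_le_opSemi hx)

end LowerBound

theorem stmt_4_general (lam : ℝ) (hlam : 0 ≤ lam)
    (hBAP : ∀ (s : Finset X) (ε : ℝ), 0 < ε → ∃ F : X →L[ℂ] X,
      FiniteDimensional ℂ (LinearMap.range (F : X →ₗ[ℂ] X)) ∧ ‖F‖ ≤ lam ∧
      ∀ x ∈ s, ‖F x - x‖ < ε) :
    (∀ T S : X →L[ℂ] X, opSemi (T + S) ≤ opSemi T + opSemi S) ∧
    (∀ (c : ℂ) (T : X →L[ℂ] X), opSemi (c • T) = ‖c‖ * opSemi T) ∧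
    (∀ T : X →L[ℂ] X,
      ((1 + lam)⁻¹) ^ 2 * distK T ≤ opSemi T ∧ opSemi T ≤ 2 * distK T) :=
  ⟨opSemi_add_le, opSemi_smul, fun T =>
    ⟨inv_one_add_sq_mul_distK_le_opSemi hlam hBAP T, opSemi_le_two_mul_distK T⟩⟩

/-- if `X` has the `λ`-bounded approximation property then
`|·|` is a seminorm on `L(X)` with
`(1+λ)⁻² · dist(T, K(X)) ≤ |T| ≤ 2 · dist(T, K(X))`. -/
theorem stmt_4 [CompleteSpace X] (lam : ℝ) (hlam : 0 ≤ lam)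
    (hBAP : ∀ (s : Finset X) (ε : ℝ), 0 < ε → ∃ F : X →L[ℂ] X,
      FiniteDimensional ℂ (LinearMap.range (F : X →ₗ[ℂ] X)) ∧ ‖F‖ ≤ lam ∧
      ∀ x ∈ s, ‖F x - x‖ < ε) :
    (∀ T S : X →L[ℂ] X, opSemi (T + S) ≤ opSemi T + opSemi S) ∧
    (∀ (c : ℂ) (T : X →L[ℂ] X), opSemi (c • T) = ‖c‖ * opSemi T) ∧
    (∀ T : X →L[ℂ] X,
      ((1 + lam)⁻¹) ^ 2 * distK T ≤ opSemi T ∧ opSemi T ≤ 2 * distK T) :=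
  stmt_4_general lam hlam hBAP
end

section
/- Let U be a Banach space with a 1-unconditional normalized basis (u_s), X a Banach space, and (I_s)_{s=1}^∞ mutually annihilating bounded projections on X with sup_s ‖I_s‖ = A < ∞. Suppose there is a constant C such that for every x_1 ∈ X_1, ..., x_N ∈ X_N (where X_s = I_s(X)) one has ‖∑_{s=1}^N Q x_s‖ ≤ C max_{1≤s≤N} ‖x_s‖, where Q : X → X/X_0 is the quotient map and X_0 = ∩_s ker(I_s). Then the map x + X_0 ↦ (I_s x)_{s=1}^∞ is an A·C-isomorphism from Z/X_0 onto a subspace of the c_0-sum (⊕_{s=1}^∞ X_s)_{c_0}, where Z = closure of the span of ∪_{s≥0} X_s. -/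
/-! Every vector of the span of `X₀` and the ranges `X_s` is killed by all but finitely many `I_s`.
For such `x`, the difference `x - ∑_{s<N} I_s x` lies in `X₀`, so the hypothesis bounds the quotient
norm; conversely `‖I_s x‖ = ‖I_s (x - y)‖ ≤ A ‖x - y‖` for every `y ∈ X₀`. The uniform bound
`‖I_s‖ ≤ A` makes `x ↦ sup_s ‖I_s x‖` Lipschitz and the family `(I_s)` equicontinuous, so both the
estimate and the convergence `I_s x → 0` pass to the closure `Z`. -/

open Filter Metric Set Topology

theorem ContinuousLinearMap.norm_apply_le_mul_infDist {𝕜 E F : Type*} [NontriviallyNormedField 𝕜]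
    [SeminormedAddCommGroup E] [SeminormedAddCommGroup F] [NormedSpace 𝕜 E] [NormedSpace 𝕜 F]
    (f : E →L[𝕜] F) {S : Set E} (hS : S.Nonempty) (hf : ∀ y ∈ S, f y = 0) (x : E) :
    ‖f x‖ ≤ ‖f‖ * infDist x S := by
  have : Nonempty S := hS.to_subtype
  rw [infDist_eq_iInf, Real.mul_iInf_of_nonneg (norm_nonneg f)]
  refine le_ciInf fun ⟨y, hy⟩ => ?_
  calc ‖f x‖ = ‖f (x - y)‖ := by rw [map_sub, hf y hy, sub_zero]
    _ ≤ ‖f‖ * dist x y := by rw [dist_eq_norm]; exact f.le_opNorm _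

theorem LipschitzWith.ciSup {ι α : Type*} [Nonempty ι] [PseudoMetricSpace α] {f : ι → α → ℝ}
    {K : NNReal} (hf : ∀ i, LipschitzWith K (f i)) (hbdd : ∀ x, BddAbove (range fun i => f i x)) :
    LipschitzWith K fun x => ⨆ i, f i x :=
  LipschitzWith.of_le_add_mul K fun x y =>
    ciSup_le fun i => ((hf i).le_add_mul x y).trans (by gcongr; exact le_ciSup (hbdd y) i)

theorem Metric.infDist_eq_of_sub_mem {M : Type*} [SeminormedAddCommGroup M] {S : AddSubgroup M}
    {x y : M} (h : x - y ∈ S) : infDist x S = infDist y S := by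
  rw [← QuotientAddGroup.norm_mk, ← QuotientAddGroup.norm_mk, (QuotientAddGroup.eq).2]
  simpa [neg_add_eq_sub] using S.neg_mem h

namespace ProjectionFamily

variable {𝕜 X : Type*} [NontriviallyNormedField 𝕜] [NormedAddCommGroup X] [NormedSpace 𝕜 X]
  (I : ℕ → X →L[𝕜] X)

def commonKer : Submodule 𝕜 X := ⨅ s, LinearMap.ker (I s : X →ₗ[𝕜] X)

def finitelySupported : Submodule 𝕜 X where
  carrier := {x | ∀ᶠ s in atTop, I s x = 0}
  add_mem' hx hy := by filter_upwards [hx, hy] with s hxs hys; simp [hxs, hys]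
  zero_mem' := by simp
  smul_mem' c x hx := by filter_upwards [hx] with s hs; simp [hs]

variable {I}

theorem mem_commonKer {x : X} : x ∈ commonKer I ↔ ∀ s, I s x = 0 := by
  simp [commonKer, Submodule.mem_iInf]

theorem apply_apply_eq_ite (hproj : ∀ s, (I s).comp (I s) = I s)
    (hann : ∀ s t, s ≠ t → (I s).comp (I t) = 0) (s t : ℕ) (x : X) :
    I t (I s x) = if s = t then I s x else 0 := by
  split_ifs with hst
  · subst hst; exact congr($(hproj s) x)
  · exact congr($(hann t s (Ne.symm hst)) x)

theorem span_le_finitelySupported (hann : ∀ s t, s ≠ t → (I s).comp (I t) = 0) :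
    Submodule.span 𝕜 ((commonKer I : Set X) ∪ ⋃ s, {z | I s z = z}) ≤ finitelySupported I := by
  refine Submodule.span_le.2 (union_subset (fun x hx => ?_) (iUnion_subset fun t x hx => ?_))
  · exact Eventually.of_forall (mem_commonKer.1 hx)
  · filter_upwards [eventually_ne_atTop t] with s hst
    rw [← (show I t x = x from hx)]
    exact congr($(hann s t hst) x)

variable {A : ℝ}

theorem bddAbove_range_norm_apply (hA : ∀ s, ‖I s‖ ≤ A) (x : X) :
    BddAbove (range fun s => ‖I s x‖) :=
  ⟨A * ‖x‖, forall_mem_range.2 fun s => (I s).le_of_opNorm_le (hA s) x⟩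

theorem continuous_iSup_norm_apply (hA : ∀ s, ‖I s‖ ≤ A) :
    Continuous fun x => ⨆ s, ‖I s x‖ := by
  have hA₀ : 0 ≤ A := (norm_nonneg _).trans (hA 0)
  refine (LipschitzWith.ciSup (K := ⟨A, hA₀⟩) (fun s => ?_) (bddAbove_range_norm_apply hA)).continuous
  exact (lipschitzWith_one_norm.comp ((I s).lipschitz.weaken (show ‖I s‖₊ ≤ ⟨A, hA₀⟩ from hA s))).weaken
    (one_mul _).le

theorem iSup_norm_apply_le_mul_infDist (hA : ∀ s, ‖I s‖ ≤ A) (x : X) :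
    ⨆ s, ‖I s x‖ ≤ A * infDist x (commonKer I) :=
  ciSup_le fun s =>
    ((I s).norm_apply_le_mul_infDist ⟨0, zero_mem _⟩ (fun _ hy => mem_commonKer.1 hy s) x).trans
      (by gcongr; exacts [infDist_nonneg, hA s])

theorem closure_finitelySupported_subset (hA : ∀ s, ‖I s‖ ≤ A) :
    closure (finitelySupported I : Set X) ⊆ {x | Tendsto (I · x) atTop (𝓝 0)} := by
  have hequi : Equicontinuous ((↑) ∘ I) :=
    ((NormedSpace.equicontinuous_TFAE I).out 5 1).1 (⟨A, hA⟩ : ∃ C, ∀ s, ‖I s‖ ≤ C)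
  refine closure_minimal (fun x hx => tendsto_nhds_of_eventually_eq hx) ?_
  exact hequi.isClosed_setOfPred_tendsto continuous_const

variable {C : ℝ}

theorem sub_sum_range_mem_commonKer (hproj : ∀ s, (I s).comp (I s) = I s)
    (hann : ∀ s t, s ≠ t → (I s).comp (I t) = 0) {N : ℕ} {x : X} (hx : ∀ s ≥ N, I s x = 0) :
    x - ∑ s ∈ Finset.range N, I s x ∈ commonKer I := by
  refine mem_commonKer.2 fun t => ?_
  simp only [map_sub, map_sum, apply_apply_eq_ite hproj hann, Finset.sum_ite_eq', Finset.mem_range]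
  split_ifs with ht
  · exact sub_self _
  · rw [hx t (not_lt.1 ht), sub_zero]

theorem infDist_commonKer_le_of_mem_finitelySupported (hA : ∀ s, ‖I s‖ ≤ A)
    (hproj : ∀ s, (I s).comp (I s) = I s) (hann : ∀ s t, s ≠ t → (I s).comp (I t) = 0)
    (hC : ∀ (N : ℕ) (x : Fin N → X), (∀ s : Fin N, I (s : ℕ) (x s) = x s) →
      ∀ M : ℝ, 0 ≤ M → (∀ s, ‖x s‖ ≤ M) → infDist (∑ s, x s) (commonKer I) ≤ C * M)
    {x : X} (hx : x ∈ finitelySupported I) :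
    infDist x (commonKer I) ≤ C * ⨆ s, ‖I s x‖ := by
  obtain ⟨N, hN⟩ := eventually_atTop.1 hx
  have hbdd := bddAbove_range_norm_apply hA x
  have hsum := hC N (fun s => I s x) (fun s => congr($(hproj s) x)) _
    (le_ciSup_of_le hbdd 0 (norm_nonneg _)) (fun s => le_ciSup hbdd s)
  rw [Fin.sum_univ_eq_sum_range (fun s => I s x)] at hsum
  exact (infDist_eq_of_sub_mem (S := (commonKer I).toAddSubgroup)
    (sub_sum_range_mem_commonKer hproj hann hN)).trans_le hsum

theorem infDist_commonKer_le_of_mem_closure (hA : ∀ s, ‖I s‖ ≤ A)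
    (hproj : ∀ s, (I s).comp (I s) = I s) (hann : ∀ s t, s ≠ t → (I s).comp (I t) = 0)
    (hC : ∀ (N : ℕ) (x : Fin N → X), (∀ s : Fin N, I (s : ℕ) (x s) = x s) →
      ∀ M : ℝ, 0 ≤ M → (∀ s, ‖x s‖ ≤ M) → infDist (∑ s, x s) (commonKer I) ≤ C * M)
    {x : X} (hx : x ∈ closure (finitelySupported I : Set X)) :
    infDist x (commonKer I) ≤ C * ⨆ s, ‖I s x‖ :=
  closure_minimal (fun _ hy => infDist_commonKer_le_of_mem_finitelySupported hA hproj hann hC hy)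
    (isClosed_le (continuous_infDist_pt _) (continuous_const.mul (continuous_iSup_norm_apply hA))) hx

end ProjectionFamily

open ProjectionFamily in
/-- under the quotient condition, `x + X₀ ↦ (I_s x)` is an
`A·C`-isomorphism of `Z/X₀` onto a subspace of `(⊕_s X_s)_{c₀}`; this is
expressed by the membership of `(I_s x)` in the `c₀`-sum together with the
two-sided estimate between the quotient norm and the sup norm. -/
theorem stmt_6
    {X : Type*} [NormedAddCommGroup X] [NormedSpace ℂ X]
    (I : ℕ → X →L[ℂ] X) (A C : ℝ)
    (hA : ∀ s, ‖I s‖ ≤ A)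
    (hproj : ∀ s, (I s).comp (I s) = I s)
    (hann : ∀ s t, s ≠ t → (I s).comp (I t) = 0)
    (X₀ : Set X) (hX₀ : X₀ = {z : X | ∀ s : ℕ, I s z = 0})
    (hC : ∀ (N : ℕ) (x : Fin N → X), (∀ s : Fin N, I (s : ℕ) (x s) = x s) →
      ∀ M : ℝ, 0 ≤ M → (∀ s, ‖x s‖ ≤ M) →
        Metric.infDist (∑ s, x s) X₀ ≤ C * M)
    (Z : Set X)
    (hZ : Z = closure
      (Submodule.span ℂ (X₀ ∪ ⋃ s : ℕ, {z : X | I s z = z}) : Set X)) :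
    ∀ x ∈ Z,
      Tendsto (fun s => ‖I s x‖) atTop (nhds 0) ∧
      (⨆ s, ‖I s x‖) ≤ A * Metric.infDist x X₀ ∧
      Metric.infDist x X₀ ≤ C * ⨆ s, ‖I s x‖ := by
  intro x hx
  obtain rfl : X₀ = commonKer I := by ext; rw [hX₀, SetLike.mem_coe, mem_commonKer]; rfl
  subst hZ
  have hx' : x ∈ closure (finitelySupported I : Set X) :=
    closure_mono (span_le_finitelySupported hann) hx
  exact ⟨tendsto_zero_iff_norm_tendsto_zero.1 (closure_finitelySupported_subset hA hx'),
    iSup_norm_apply_le_mul_infDist hA x,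
    infDist_commonKer_le_of_mem_closure hA hproj hann hC hx'⟩
end

section
/- Let (Γ_n)_{n=0}^∞ be an increasing sequence of finite sets with union Γ, equipped with a Bourgain–Delbaen scheme satisfying the standard extension assumption with parameter 0 < ϑ < 1/2 (each extension functional c*_γ is either 0, or λ e*_η ∘ P_E with |λ| ≤ ϑ, or e*_ξ + λ e*_η ∘ P_E with |λ| ≤ ϑ). Then every γ ∈ Γ satisfies: either e*_γ = d*_γ, or e*_γ = ∑_{r=1}^a d*_{ξ_r} + ∑_{r=1}^a λ_r e*_{η_r} ∘ P_{E_r}, where a = age(γ), ξ_a = γ, rank(ξ_1) < ... < rank(ξ_a), E_1 is an interval of [0, rank(ξ_1)), E_r is an interval of (rank(ξ_{r−1}), rank(ξ_r)) for r ≥ 2, |λ_r| ≤ ϑ, and rank(η_r) < rank(ξ_r) for all r. -/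
/-- in a Bourgain–Delbaen scheme satisfying the standard extension
assumption with parameter `0 < ϑ < 1/2`, every `γ ∈ Γ` satisfies
`e*_γ = d*_γ` or admits an evaluation analysis
`e*_γ = ∑ d*_{ξ_r} + ∑ λ_r e*_{η_r} ∘ P_{E_r}` with the listed properties. -/
theorem stmt_7
    {X : Type*} [AddCommGroup X] [Module ℂ X]
    {Γ : Type*} (rank : Γ → ℕ)
    (hfin : ∀ n, {γ : Γ | rank γ ≤ n}.Finite)
    (e d : Γ → X →ₗ[ℂ] ℂ)
    (P : ℕ → ℕ → X →ₗ[ℂ] X)  -- `P l u` is the FDD projection onto ranks in `[l, u]`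
    (ϑ : ℝ) (hϑ0 : 0 < ϑ) (hϑ : ϑ < 1 / 2)
    (ξpf : Γ → Option Γ) (Epf : Γ → Option (ℕ × ℕ))
    (lampf : Γ → Option ℂ) (ηpf : Γ → Option Γ)
    (hBD : ∀ γ : Γ,
      -- case (0)
      (ξpf γ = none ∧ Epf γ = none ∧ lampf γ = none ∧ ηpf γ = none ∧ e γ = d γ) ∨
      -- case (a)
      (∃ (l u : ℕ) (lam : ℂ) (η : Γ),
        ξpf γ = none ∧ Epf γ = some (l, u) ∧ lampf γ = some lam ∧ ηpf γ = some η ∧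
        u < rank γ ∧ ‖lam‖ ≤ ϑ ∧ rank η < rank γ ∧
        e γ = d γ + lam • (e η).comp (P l u)) ∨
      -- case (b)
      (∃ (ξ : Γ) (l u : ℕ) (lam : ℂ) (η : Γ),
        ξpf γ = some ξ ∧ (Epf ξ).isSome ∧ rank ξ < rank γ ∧
        Epf γ = some (l, u) ∧ rank ξ < l ∧ u < rank γ ∧
        lampf γ = some lam ∧ ‖lam‖ ≤ ϑ ∧
        ηpf γ = some η ∧ rank ξ < rank η ∧ rank η < rank γ ∧
        e γ = d γ + e ξ + lam • (e η).comp (P l u))) :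
    ∀ γ : Γ, e γ = d γ ∨
      ∃ (a : ℕ) (ha : 0 < a) (ξs ηs : Fin a → Γ) (l u : Fin a → ℕ) (lam : Fin a → ℂ),
        -- the tuples form the analysis of γ
        ξs ⟨a - 1, by omega⟩ = γ ∧
        ξpf (ξs ⟨0, ha⟩) = none ∧
        (∀ (r : Fin a) (h : (r : ℕ) + 1 < a), ξpf (ξs ⟨(r : ℕ) + 1, h⟩) = some (ξs r)) ∧
        -- (i) ranks of the ξ_r increase and ξ_a = γ
        StrictMono (fun r => rank (ξs r)) ∧
        -- (ii) the intervals E_r = [l r, u r] interlace with the ranks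
        u ⟨0, ha⟩ < rank (ξs ⟨0, ha⟩) ∧
        (∀ (r : Fin a) (h : (r : ℕ) + 1 < a),
          rank (ξs r) < l ⟨(r : ℕ) + 1, h⟩ ∧
            u ⟨(r : ℕ) + 1, h⟩ < rank (ξs ⟨(r : ℕ) + 1, h⟩)) ∧
        -- (iii) the coefficients are ϑ-small
        (∀ r, ‖lam r‖ ≤ ϑ) ∧
        -- (iv) rank(η_r) < rank(ξ_r)
        (∀ r, rank (ηs r) < rank (ξs r)) ∧
        -- the evaluation analysis
        e γ = (∑ r, d (ξs r)) + ∑ r, lam r • (e (ηs r)).comp (P (l r) (u r)) := by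

  suffices key : ∀ n (γ : Γ), rank γ = n →
      (ξpf γ = none ∧ Epf γ = none ∧ e γ = d γ) ∨
      ∃ (a : ℕ) (ha : 0 < a) (ξs ηs : Fin a → Γ) (l u : Fin a → ℕ) (lam : Fin a → ℂ),
        ξs ⟨a - 1, by omega⟩ = γ ∧
        ξpf (ξs ⟨0, ha⟩) = none ∧
        (∀ (r : Fin a) (h : (r : ℕ) + 1 < a), ξpf (ξs ⟨(r : ℕ) + 1, h⟩) = some (ξs r)) ∧
        StrictMono (fun r => rank (ξs r)) ∧
        u ⟨0, ha⟩ < rank (ξs ⟨0, ha⟩) ∧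
        (∀ (r : Fin a) (h : (r : ℕ) + 1 < a),
          rank (ξs r) < l ⟨(r : ℕ) + 1, h⟩ ∧
            u ⟨(r : ℕ) + 1, h⟩ < rank (ξs ⟨(r : ℕ) + 1, h⟩)) ∧
        (∀ r, ‖lam r‖ ≤ ϑ) ∧
        (∀ r, rank (ηs r) < rank (ξs r)) ∧
        e γ = (∑ r, d (ξs r)) + ∑ r, lam r • (e (ηs r)).comp (P (l r) (u r)) by
    intro γ
    rcases key (rank γ) γ rfl with ⟨_, _, h⟩ | h
    · exact Or.inl h
    · exact Or.inr h
  intro n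
  induction n using Nat.strong_induction_on with
  | _ n IH =>
  intro γ hγ
  subst hγ
  rcases hBD γ with ⟨h1, h2, _, _, h5⟩ | ⟨lb, ub, lamb, η, h1, h2, h3, h4, h5, h6, h7, h8⟩ |
    ⟨ξ, lb, ub, lamb, η, h1, h2, h3, h4, h5, h6, h7, h8, h9, h10, h11, h12⟩
  · exact Or.inl ⟨h1, h2, h5⟩
  · -- case (a): age 1
    refine Or.inr ⟨1, one_pos, fun _ => γ, fun _ => η, fun _ => lb, fun _ => ub, fun _ => lamb,
      rfl, h1, ?_, ?_, h5, ?_, fun _ => h6, fun _ => h7, ?_⟩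
    · intro r h; omega
    · intro i j hij; exact absurd (Fin.lt_iff_val_lt_val.mp hij) (by omega)
    · intro r h; omega
    · simpa using h8
  · -- case (b): inductive step
    rcases IH (rank ξ) h3 ξ rfl with ⟨hξ1, hξ2, _⟩ | ⟨a, ha, ξs, ηs, l, u, lam,
      hlast, h0none, hchain, hmono, hu0, hinter, hlam, hη, hsum⟩
    · rw [hξ2] at h2; simp at h2
    refine Or.inr ⟨a + 1, by omega,
      (fun i => if h : (i : ℕ) < a then ξs ⟨i, h⟩ else γ),
      (fun i => if h : (i : ℕ) < a then ηs ⟨i, h⟩ else η),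
      (fun i => if h : (i : ℕ) < a then l ⟨i, h⟩ else lb),
      (fun i => if h : (i : ℕ) < a then u ⟨i, h⟩ else ub),
      (fun i => if h : (i : ℕ) < a then lam ⟨i, h⟩ else lamb),
      ?_, ?_, ?_, ?_, ?_, ?_, ?_, ?_, ?_⟩
    · simp
    · show ξpf (if h : (0 : ℕ) < a then ξs ⟨0, h⟩ else γ) = none
      rw [dif_pos ha]; exact h0none
    · intro r h
      show ξpf (if h' : (r : ℕ) + 1 < a then ξs ⟨(r : ℕ) + 1, h'⟩ else γ) =
        some (if h' : (r : ℕ) < a then ξs ⟨(r : ℕ), h'⟩ else γ)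
      have hr1 : (r : ℕ) < a + 1 := r.isLt
      by_cases hr : (r : ℕ) + 1 < a
      · rw [dif_pos hr, dif_pos (by omega : (r : ℕ) < a)]
        exact hchain ⟨(r : ℕ), by omega⟩ hr
      · rw [dif_neg hr, dif_pos (by omega : (r : ℕ) < a), h1]
        congr 1
        rw [← hlast]
        congr 1
        exact Fin.ext (by simp; omega)
    · intro i j hij
      have hij' : (i : ℕ) < (j : ℕ) := hij
      show rank (if h : (i : ℕ) < a then ξs ⟨i, h⟩ else γ) <
        rank (if h : (j : ℕ) < a then ξs ⟨j, h⟩ else γ)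
      by_cases hj : (j : ℕ) < a
      · have hi : (i : ℕ) < a := by omega
        rw [dif_pos hi, dif_pos hj]
        exact hmono (show ((⟨(i : ℕ), hi⟩ : Fin a)) < ⟨(j : ℕ), hj⟩ from hij')
      · have hi : (i : ℕ) < a := by have := j.isLt; omega
        rw [dif_neg hj, dif_pos hi]
        have h1' : rank (ξs ⟨(i : ℕ), hi⟩) ≤ rank (ξs ⟨a - 1, by omega⟩) := by
          rcases eq_or_lt_of_le (show (i : ℕ) ≤ a - 1 by omega) with heq | hlt
          · exact le_of_eq (congrArg rank (congrArg ξs (Fin.ext heq)))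
          · exact le_of_lt (hmono (show ((⟨(i : ℕ), hi⟩ : Fin a)) < ⟨a - 1, by omega⟩ from hlt))
        calc rank (ξs ⟨(i : ℕ), hi⟩) ≤ rank (ξs ⟨a - 1, by omega⟩) := h1'
          _ = rank ξ := by rw [hlast]
          _ < rank γ := h3
    · show (if h : (0 : ℕ) < a then u ⟨0, h⟩ else ub) <
        rank (if h : (0 : ℕ) < a then ξs ⟨0, h⟩ else γ)
      rw [dif_pos ha, dif_pos ha]; exact hu0
    · intro r h
      show rank (if h' : (r : ℕ) < a then ξs ⟨(r : ℕ), h'⟩ else γ) <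
          (if h' : (r : ℕ) + 1 < a then l ⟨(r : ℕ) + 1, h'⟩ else lb) ∧
        (if h' : (r : ℕ) + 1 < a then u ⟨(r : ℕ) + 1, h'⟩ else ub) <
          rank (if h' : (r : ℕ) + 1 < a then ξs ⟨(r : ℕ) + 1, h'⟩ else γ)
      by_cases hr : (r : ℕ) + 1 < a
      · rw [dif_pos hr, dif_pos hr, dif_pos hr, dif_pos (by omega : (r : ℕ) < a)]
        exact hinter ⟨(r : ℕ), by omega⟩ hr
      · rw [dif_neg hr, dif_neg hr, dif_neg hr, dif_pos (by omega : (r : ℕ) < a)]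
        constructor
        · have : ((⟨(r : ℕ), by omega⟩ : Fin a)) = ⟨a - 1, by omega⟩ := Fin.ext (by simp; omega)
          rw [this, hlast]; exact h5
        · exact h6
    · intro r
      show ‖if h : (r : ℕ) < a then lam ⟨(r : ℕ), h⟩ else lamb‖ ≤ ϑ
      by_cases hr : (r : ℕ) < a
      · rw [dif_pos hr]; exact hlam _
      · rw [dif_neg hr]; exact h8
    · intro r
      show rank (if h : (r : ℕ) < a then ηs ⟨(r : ℕ), h⟩ else η) <
        rank (if h : (r : ℕ) < a then ξs ⟨(r : ℕ), h⟩ else γ)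
      by_cases hr : (r : ℕ) < a
      · rw [dif_pos hr, dif_pos hr]; exact hη _
      · rw [dif_neg hr, dif_neg hr]; exact h11
    · rw [h12, hsum, Fin.sum_univ_castSucc, Fin.sum_univ_castSucc]
      have e1 : ∀ i : Fin a,
          d (if h : ((Fin.castSucc i : Fin (a+1)) : ℕ) < a then ξs ⟨_, h⟩ else γ) = d (ξs i) := by
        intro i
        have hi : ((Fin.castSucc i : Fin (a+1)) : ℕ) < a := by simpa using i.isLt
        have hmk : ((⟨((Fin.castSucc i : Fin (a+1)) : ℕ), hi⟩ : Fin a)) = i := Fin.ext (by simp)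
        rw [dif_pos hi, hmk]
      have e2 : ∀ i : Fin a,
          (if h : ((Fin.castSucc i : Fin (a+1)) : ℕ) < a then lam ⟨_, h⟩ else lamb) •
            (e (if h : ((Fin.castSucc i : Fin (a+1)) : ℕ) < a then ηs ⟨_, h⟩ else η)).comp
              (P (if h : ((Fin.castSucc i : Fin (a+1)) : ℕ) < a then l ⟨_, h⟩ else lb)
                 (if h : ((Fin.castSucc i : Fin (a+1)) : ℕ) < a then u ⟨_, h⟩ else ub)) =
          lam i • (e (ηs i)).comp (P (l i) (u i)) := by
        intro i
        have hi : ((Fin.castSucc i : Fin (a+1)) : ℕ) < a := by simpa using i.isLt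
        have hmk : ((⟨((Fin.castSucc i : Fin (a+1)) : ℕ), hi⟩ : Fin a)) = i := Fin.ext (by simp)
        rw [dif_pos hi, dif_pos hi, dif_pos hi, dif_pos hi, hmk]
      rw [Finset.sum_congr rfl (fun i _ => e1 i), Finset.sum_congr rfl (fun i _ => e2 i)]
      have hlastval : ((Fin.last a : Fin (a+1)) : ℕ) = a := rfl
      simp only [hlastval, dif_neg (lt_irrefl a)]
      abel
end

section
/- Let 𝔛 be a Bourgain–Delbaen-C-ℒ_∞-space with index set Γ and Γ' ⊂ Γ a subset such that for every γ ∈ Γ there exists an interval E of ℕ_0 with e*_γ ∘ I_{Γ'} = e*_γ ∘ P_E (where I_{Γ'} is the coordinate projection onto span{d_γ : γ ∈ Γ'} and P_E the FDD interval projection). Then I_{Γ'} extends to a bounded linear projection on 𝔛 of norm at most 2C, with image the closed span 𝔛' of {d_γ : γ ∈ Γ'}. -/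
/-!
Send a finitely supported `c` to `∑ c_η d_η` and to `∑_{η ∈ Γ'} c_η d_η`. For each coordinate
`e_γ` the interval hypothesis rewrites `e_γ (∑_{η ∈ Γ'} c_η d_η)` as `e_γ (P_E ∑ c_η d_η)`, so,
since the coordinates norm `𝔛`, `‖∑_{η ∈ Γ'} c_η d_η‖ ≤ 2C ‖∑ c_η d_η‖`. This estimate makes
`I_{Γ'}` well defined and bounded on the dense span of the `d_γ`, hence it extends to `𝔛`.
Idempotency and the range are then checked on the `d_γ` and passed to closures by continuity.
-/

open Set Submodule

section Extension

variable {𝕜 E F ι : Type*} [NontriviallyNormedField 𝕜]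
  [NormedAddCommGroup E] [NormedSpace 𝕜 E] [NormedAddCommGroup F] [NormedSpace 𝕜 F]

theorem norm_le_mul_of_forall_coord_eq {e : ι → E →L[𝕜] 𝕜} (he : ∀ i, ‖e i‖ ≤ 1)
    {x y : E} (hy : ‖y‖ ≤ ⨆ i, ‖e i y‖) {M : ℝ} (hM : 0 ≤ M)
    (h : ∀ i, ∃ Q : E →L[𝕜] E, ‖Q‖ ≤ M ∧ e i y = e i (Q x)) : ‖y‖ ≤ M * ‖x‖ := by
  refine hy.trans (Real.iSup_le (fun i => ?_) (by positivity))
  obtain ⟨Q, hQ, hQy⟩ := h i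
  calc ‖e i y‖ = ‖e i (Q x)‖ := by rw [hQy]
    _ ≤ 1 * (M * ‖x‖) :=
        (e i).le_of_opNorm_le_of_le (he i) (Q.le_of_opNorm_le hQ x)
    _ = M * ‖x‖ := one_mul _

theorem exists_continuousLinearMap_apply_eq_of_dense_span [CompleteSpace F] {v : ι → E}
    (hv : Dense (span 𝕜 (range v) : Set E)) {w : ι → F} {M : ℝ} (hM : 0 ≤ M)
    (hvw : ∀ c : ι →₀ 𝕜, ‖Finsupp.linearCombination 𝕜 w c‖ ≤ M * ‖Finsupp.linearCombination 𝕜 v c‖) :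
    ∃ T : E →L[𝕜] F, ‖T‖ ≤ M ∧ ∀ i, T (v i) = w i := by
  have hdense : DenseRange (Finsupp.linearCombination 𝕜 v) := by
    rwa [DenseRange, ← LinearMap.coe_range, Finsupp.range_linearCombination]
  refine ⟨_, LinearMap.opNorm_extendOfNorm_le hdense hM hvw, fun i => ?_⟩
  simpa using LinearMap.extendOfNorm_eq hdense ⟨M, hvw⟩ (Finsupp.single i 1)

end Extension

section Indicator

variable {𝕜 E ι : Type*} [Semiring 𝕜] [AddCommMonoid E] [Module 𝕜 E] [TopologicalSpace E]
  [T2Space E] {v : ι → E} {s : Set ι} {T : E →L[𝕜] E}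

theorem ContinuousLinearMap.comp_self_of_apply_eq_indicator
    (hv : Dense (span 𝕜 (range v) : Set E)) (hT : ∀ i, T (v i) = s.indicator v i) :
    T.comp T = T := by
  refine ContinuousLinearMap.ext_on hv ?_
  rintro _ ⟨i, rfl⟩
  by_cases hi : i ∈ s <;> simp [hT, hi]

theorem ContinuousLinearMap.range_eq_closure_span_of_apply_eq_indicator
    (hv : Dense (span 𝕜 (range v) : Set E)) (hT : ∀ i, T (v i) = s.indicator v i) :
    range T = closure (span 𝕜 (v '' s) : Set E) := by
  apply Subset.antisymm
  · have hspan : span 𝕜 (T '' range v) ≤ span 𝕜 (v '' s) := by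
      rw [span_le]
      rintro _ ⟨_, ⟨i, rfl⟩, rfl⟩
      by_cases hi : i ∈ s
      · simpa [hT, hi] using subset_span (mem_image_of_mem v hi)
      · simp [hT, hi]
    calc range T = T '' closure (span 𝕜 (range v) : Set E) := by
          rw [hv.closure_eq, image_univ]
      _ ⊆ closure (T '' (span 𝕜 (range v) : Set E)) :=
          image_closure_subset_closure_image T.continuous
      _ ⊆ closure (span 𝕜 (v '' s) : Set E) :=
          closure_mono ((map_span (T : E →ₗ[𝕜] E) _).trans_le hspan)
  · intro x hx
    have hfix : EqOn T (ContinuousLinearMap.id 𝕜 E) (v '' s) := by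
      rintro _ ⟨i, hi, rfl⟩
      simp [hT, hi]
    exact ⟨x, ContinuousLinearMap.eqOn_closure_span hfix hx⟩

end Indicator

open scoped Classical

theorem stmt_9_general
    {X : Type*} [NormedAddCommGroup X] [NormedSpace ℂ X] [CompleteSpace X]
    {Γ : Type*}
    (C : ℝ)
    (d : Γ → X) (e : Γ → X →L[ℂ] ℂ)
    (hdense : Dense (Submodule.span ℂ (Set.range d) : Set X))
    -- the coordinates determine the norm, as in a subspace of ℓ∞(Γ)
    (he1 : ∀ γ, ‖e γ‖ ≤ 1)
    (henorm : ∀ x : X, ‖x‖ = ⨆ γ, ‖e γ x‖)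
    -- the FDD interval projections
    (P : ℕ → ℕ → X →L[ℂ] X)
    (hPnorm : ∀ l u, ‖P l u‖ ≤ 2 * C)
    (Γ' : Set Γ)
    -- for every γ there is an interval E with e*_γ ∘ I_{Γ'} = e*_γ ∘ P_E
    (hint : ∀ γ : Γ, ∃ l u : ℕ, ∀ η : Γ,
      e γ (P l u (d η)) = if η ∈ Γ' then e γ (d η) else 0) :
    ∃ Iproj : X →L[ℂ] X,
      ‖Iproj‖ ≤ 2 * C ∧
      Iproj.comp Iproj = Iproj ∧
      (∀ η : Γ, Iproj (d η) = if η ∈ Γ' then d η else 0) ∧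
      Set.range ⇑Iproj = closure (Submodule.span ℂ (d '' Γ') : Set X) := by
  have hC : 0 ≤ 2 * C := (norm_nonneg _).trans (hPnorm 0 0)
  have hbound : ∀ c : Γ →₀ ℂ, ‖Finsupp.linearCombination ℂ (Γ'.indicator d) c‖ ≤
      2 * C * ‖Finsupp.linearCombination ℂ d c‖ := by
    refine fun c => norm_le_mul_of_forall_coord_eq he1 (henorm _).le hC fun γ => ?_
    obtain ⟨l, u, hlu⟩ := hint γ
    refine ⟨P l u, hPnorm l u, ?_⟩
    simp only [← ContinuousLinearMap.coe_coe, Finsupp.apply_linearCombination]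
    congr 2
    ext η
    by_cases hη : η ∈ Γ' <;> simp [hlu, hη]
  obtain ⟨I, hInorm, hId⟩ := exists_continuousLinearMap_apply_eq_of_dense_span hdense hC hbound
  refine ⟨I, hInorm, I.comp_self_of_apply_eq_indicator hdense hId, fun η => ?_,
    I.range_eq_closure_span_of_apply_eq_indicator hdense hId⟩
  rw [hId, Set.indicator_apply]

/-- in a Bourgain–Delbaen-`C`-`ℒ∞`-space, if for every `γ` the
functional `e*_γ ∘ I_{Γ'}` coincides with `e*_γ ∘ P_E` for some interval `E`,
then the coordinate projection onto `Γ'` extends to a bounded projection of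
norm at most `2C` with image the closed span of `{d_γ : γ ∈ Γ'}`. -/
theorem stmt_9
    {X : Type*} [NormedAddCommGroup X] [NormedSpace ℂ X] [CompleteSpace X]
    {Γ : Type*} (rank : Γ → ℕ)
    (C : ℝ) (hC : 1 ≤ C)
    (d : Γ → X) (e dstar : Γ → X →L[ℂ] ℂ)
    (hind : LinearIndependent ℂ d)
    (hdense : Dense (Submodule.span ℂ (Set.range d) : Set X))
    (hbio : ∀ γ γ' : Γ, dstar γ (d γ') = if γ = γ' then 1 else 0)
    -- the coordinates determine the norm, as in a subspace of ℓ∞(Γ)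
    (he1 : ∀ γ, ‖e γ‖ ≤ 1)
    (henorm : ∀ x : X, ‖x‖ = ⨆ γ, ‖e γ x‖)
    -- the FDD interval projections
    (P : ℕ → ℕ → X →L[ℂ] X)
    (hPnorm : ∀ l u, ‖P l u‖ ≤ 2 * C)
    (hPd : ∀ l u γ, P l u (d γ) = if l ≤ rank γ ∧ rank γ ≤ u then d γ else 0)
    (Γ' : Set Γ)
    -- for every γ there is an interval E with e*_γ ∘ I_{Γ'} = e*_γ ∘ P_E
    (hint : ∀ γ : Γ, ∃ l u : ℕ, ∀ η : Γ,
      e γ (P l u (d η)) = if η ∈ Γ' then e γ (d η) else 0) :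
    ∃ Iproj : X →L[ℂ] X,
      ‖Iproj‖ ≤ 2 * C ∧
      Iproj.comp Iproj = Iproj ∧
      (∀ η : Γ, Iproj (d η) = if η ∈ Γ' then d η else 0) ∧
      Set.range ⇑Iproj = closure (Submodule.span ℂ (d '' Γ') : Set X) :=
  stmt_9_general C d e hdense he1 henorm P hPnorm Γ' hint
end

section
/- Let f ∈ W_q[(A_{ñ_j}, θ_j)_{j∈ℕ}] have a tree-analysis (f_t)_{t∈T} with associated functional g_f. Then for every x ∈ c_00(ℕ), |f(x)| ≤ ‖x‖_q · max{ |f(e_k)| / |g_f(e_k)| : k ∈ supp(f) ∩ supp(x) }. -/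
open scoped Classical

/-!
Since all θ_j are nonzero, an induction up the tree shows that `f_t` and `g_t` have the same
support at every node. Each inner node of `g` is `ñ^{-1/p}` times a sum of at most `ñ`
disjointly supported children, so Hölder's inequality over the children propagates
`‖g_t‖_p ≤ 1` from the leaves to the root. Finally
`|f(x)| ≤ ∑ |f(e_k)| |x_k| ≤ M ∑ |g_f(e_k)| |x_k| ≤ M ‖g_f‖_p ‖x‖_q`.
-/

open Finset Relation

section Rooted

variable {T : Type*} {parent : T → Option T}

lemma transGen_self_of_parent_eq {a b : T} (hab : parent b = some a)
    (h : TransGen (fun a b => parent b = some a) b b) :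
    TransGen (fun a b => parent b = some a) a a := by
  obtain ⟨c, hbc, hcb⟩ := TransGen.tail'_iff.1 h
  obtain rfl : c = a := Option.some_inj.1 (hcb.symm.trans hab)
  exact TransGen.head' hab hbc

lemma not_transGen_self_of_rooted {root : T} (hroot : parent root = none)
    (hrooted : ∀ t : T, t = root ∨ TransGen (fun a b => parent b = some a) root t) (t : T) :
    ¬ TransGen (fun a b => parent b = some a) t t := by
  have hroot' : ¬ TransGen (fun a b => parent b = some a) root root := fun h => by
    obtain ⟨c, -, hc⟩ := TransGen.tail'_iff.1 h
    simp [hroot] at hc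
  rcases hrooted t with rfl | hpath
  · exact hroot'
  · induction hpath with
    | single h => exact fun hc => hroot' (transGen_self_of_parent_eq h hc)
    | tail _ h ih => exact fun hc => ih (transGen_self_of_parent_eq h hc)

lemma wellFounded_parent_eq_some_of_rooted [Finite T] {root : T} (hroot : parent root = none)
    (hrooted : ∀ t : T, t = root ∨ TransGen (fun a b => parent b = some a) root t) :
    WellFounded fun s t : T => parent s = some t :=
  haveI : IsTrans T (TransGen fun s t : T => parent s = some t) := ⟨fun _ _ _ => TransGen.trans⟩
  haveI : Std.Irrefl (TransGen fun s t : T => parent s = some t) :=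
    ⟨fun t h => not_transGen_self_of_rooted hroot hrooted t (transGen_swap.1 h)⟩
  Subrelation.wf (r := TransGen fun s t : T => parent s = some t) (TransGen.single ·)
    (Finite.wellFounded_of_trans_of_irrefl (TransGen fun s t : T => parent s = some t))

end Rooted

section DisjointSupports

variable {ι : Type*} {C : Finset ι} {G : ι → ℕ →₀ ℝ}

lemma finsetSum_apply_of_mem_support
    (hdisj : (C : Set ι).PairwiseDisjoint fun s => (G s).support) {s : ι} (hs : s ∈ C)
    {k : ℕ} (hk : k ∈ (G s).support) : (∑ i ∈ C, G i) k = G s k := by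
  rw [Finsupp.finsetSum_apply]
  refine sum_eq_single_of_mem s hs fun i hi hne => Finsupp.notMem_support_iff.1 fun hki => ?_
  exact disjoint_left.1 (hdisj hi hs hne) hki hk

lemma support_finsetSum_of_pairwiseDisjoint
    (hdisj : (C : Set ι).PairwiseDisjoint fun s => (G s).support) :
    (∑ i ∈ C, G i).support = C.biUnion fun s => (G s).support := by
  refine subset_antisymm Finsupp.support_finsetSum fun k hk => ?_
  obtain ⟨s, hs, hks⟩ := mem_biUnion.1 hk
  rw [Finsupp.mem_support_iff, finsetSum_apply_of_mem_support hdisj hs hks]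
  exact Finsupp.mem_support_iff.1 hks

end DisjointSupports

lemma sum_rpow_one_div_le_card_rpow_mul {ι : Type*} (s : Finset ι) {b : ι → ℝ}
    (hb : ∀ i ∈ s, 0 ≤ b i) {p q : ℝ} (hq : 1 ≤ q) (hpq : 1 / p + 1 / q = 1) :
    ∑ i ∈ s, b i ^ (1 / q) ≤ (#s : ℝ) ^ (1 / p) * (∑ i ∈ s, b i) ^ (1 / q) := by
  have hq0 : q ≠ 0 := by linarith
  have hpow : ∀ i ∈ s, (b i ^ (1 / q)) ^ q = b i := fun i hi => by
    rw [← Real.rpow_mul (hb i hi), one_div_mul_cancel hq0, Real.rpow_one]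
  have hsum : 0 ≤ ∑ i ∈ s, b i ^ (1 / q) :=
    sum_nonneg fun i hi => Real.rpow_nonneg (hb i hi) _
  have holder := Real.rpow_sum_le_const_mul_sum_rpow_of_nonneg s hq
    (fun i hi => Real.rpow_nonneg (hb i hi) (1 / q))
  rw [sum_congr rfl hpow] at holder
  calc ∑ i ∈ s, b i ^ (1 / q) = ((∑ i ∈ s, b i ^ (1 / q)) ^ q) ^ (1 / q) := by
        rw [← Real.rpow_mul hsum, mul_one_div_cancel hq0, Real.rpow_one]
    _ ≤ ((#s : ℝ) ^ (q - 1) * ∑ i ∈ s, b i) ^ (1 / q) := by gcongr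
    _ = (#s : ℝ) ^ (1 / p) * (∑ i ∈ s, b i) ^ (1 / q) := by
        rw [Real.mul_rpow (by positivity) (sum_nonneg hb), ← Real.rpow_mul (by positivity)]
        rw [show (q - 1) * (1 / q) = 1 / p by rw [eq_sub_of_add_eq hpq]; field_simp]

/-- `‖v‖_p ≤ 1` for the exponent `p` conjugate to `q`, in the dual form `∑ |v k| w k ≤ ‖w‖_q`,
which covers `q = 1`, `p = ∞` without a separate case. -/
def DualNormLeOne (q : ℝ) (v : ℕ →₀ ℝ) : Prop :=
  ∀ w : ℕ → ℝ, (∀ k, 0 ≤ w k) →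
    ∑ k ∈ v.support, |v k| * w k ≤ (∑ k ∈ v.support, w k ^ q) ^ (1 / q)

lemma dualNormLeOne_single {q : ℝ} (hq : q ≠ 0) (k : ℕ) {ε : ℝ} (hε : |ε| = 1) :
    DualNormLeOne q (Finsupp.single k ε) := by
  intro w hw
  have hε0 : ε ≠ 0 := by rintro rfl; simp at hε
  rw [Finsupp.support_single _ hε0, sum_singleton, sum_singleton, Finsupp.single_eq_same,
    hε, one_mul, ← Real.rpow_mul (hw k), mul_one_div_cancel hq, Real.rpow_one]

section DualNorm

variable {ι : Type*} {p q : ℝ} {C : Finset ι} {n : ℕ}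

lemma dualNormLeOne_smul_sum (hq : 1 ≤ q) (hpq : 1 / p + 1 / q = 1) {G : ι → ℕ →₀ ℝ}
    (hdisj : (C : Set ι).PairwiseDisjoint fun s => (G s).support)
    (hG : ∀ s ∈ C, DualNormLeOne q (G s)) (hn : 0 < n) (hcard : #C ≤ n) :
    DualNormLeOne q (((n : ℝ) ^ (1 / p))⁻¹ • ∑ s ∈ C, G s) := by
  intro w hw
  set c := ((n : ℝ) ^ (1 / p))⁻¹
  have hnp : 0 < (n : ℝ) ^ (1 / p) := Real.rpow_pos_of_pos (Nat.cast_pos.2 hn) _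
  have hc : 0 < c := inv_pos.2 hnp
  have hval : ∀ s ∈ C, ∀ k ∈ (G s).support, |(c • ∑ s ∈ C, G s) k| = c * |G s k| :=
    fun s hs k hk => by
      rw [Finsupp.smul_apply, smul_eq_mul, finsetSum_apply_of_mem_support hdisj hs hk, abs_mul,
        abs_of_pos hc]
  have hcard' : c * (#C : ℝ) ^ (1 / p) ≤ 1 := by
    have h1p : 0 ≤ 1 / p := by
      rw [eq_sub_of_add_eq hpq, sub_nonneg, div_le_one (by linarith)]
      exact hq
    calc c * (#C : ℝ) ^ (1 / p) ≤ c * (n : ℝ) ^ (1 / p) := by gcongr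
      _ = 1 := inv_mul_cancel₀ hnp.ne'
  have hb : ∀ s ∈ C, 0 ≤ ∑ k ∈ (G s).support, w k ^ q :=
    fun s _ => sum_nonneg fun k _ => Real.rpow_nonneg (hw k) q
  rw [Finsupp.support_smul_eq hc.ne', support_finsetSum_of_pairwiseDisjoint hdisj,
    sum_biUnion hdisj, sum_biUnion hdisj]
  calc ∑ s ∈ C, ∑ k ∈ (G s).support, |(c • ∑ s ∈ C, G s) k| * w k
      = c * ∑ s ∈ C, ∑ k ∈ (G s).support, |G s k| * w k := by
        simp_rw [mul_sum]
        exact sum_congr rfl fun s hs => sum_congr rfl fun k hk => by rw [hval s hs k hk, mul_assoc]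
    _ ≤ c * ∑ s ∈ C, (∑ k ∈ (G s).support, w k ^ q) ^ (1 / q) := by
        gcongr with s hs
        exact hG s hs w hw
    _ ≤ c * ((#C : ℝ) ^ (1 / p) *
          (∑ s ∈ C, ∑ k ∈ (G s).support, w k ^ q) ^ (1 / q)) := by
        gcongr
        exact sum_rpow_one_div_le_card_rpow_mul C hb hq hpq
    _ ≤ (∑ s ∈ C, ∑ k ∈ (G s).support, w k ^ q) ^ (1 / q) := by
        rw [← mul_assoc]
        exact mul_le_of_le_one_left (Real.rpow_nonneg (sum_nonneg hb) _) hcard'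

lemma support_eq_and_dualNormLeOne_smul_sum (hq : 1 ≤ q) (hpq : 1 / p + 1 / q = 1)
    {F G : ι → ℕ →₀ ℝ} {a : ℝ} (ha : a ≠ 0) (hn : 0 < n) (hcard : #C ≤ n)
    (hdisj : (C : Set ι).PairwiseDisjoint fun s => (F s).support)
    (hFG : ∀ s ∈ C, (F s).support = (G s).support ∧ DualNormLeOne q (G s)) :
    (a • ∑ s ∈ C, F s).support = (((n : ℝ) ^ (1 / p))⁻¹ • ∑ s ∈ C, G s).support ∧
      DualNormLeOne q (((n : ℝ) ^ (1 / p))⁻¹ • ∑ s ∈ C, G s) := by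
  have hdisjG : (C : Set ι).PairwiseDisjoint fun s => (G s).support := fun s hs s' hs' hne => by
    show Disjoint (G s).support (G s').support
    rw [← (hFG s hs).1, ← (hFG s' hs').1]
    exact hdisj hs hs' hne
  refine ⟨?_, dualNormLeOne_smul_sum hq hpq hdisjG (fun s hs => (hFG s hs).2) hn hcard⟩
  rw [Finsupp.support_smul_eq ha, Finsupp.support_smul_eq
    (inv_ne_zero (Real.rpow_pos_of_pos (Nat.cast_pos.2 hn) _).ne'),
    support_finsetSum_of_pairwiseDisjoint hdisj, support_finsetSum_of_pairwiseDisjoint hdisjG]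
  exact biUnion_congr rfl fun s hs => (hFG s hs).1

end DualNorm

lemma abs_sum_mul_le_of_dualNormLeOne {q M : ℝ} (hq : 0 < q) (hM : 0 ≤ M)
    {v u x : ℕ →₀ ℝ} (hsupp : v.support ⊆ u.support) (hu : DualNormLeOne q u)
    (hratio : ∀ k ∈ v.support ∩ x.support, |v k| / |u k| ≤ M) :
    |v.sum fun k c => c * x k| ≤ (∑ k ∈ x.support, |x k| ^ q) ^ (1 / q) * M := by
  have hterm : ∀ k ∈ v.support, |v k| * |x k| ≤ M * (|u k| * |x k|) := fun k hk => by
    by_cases hx : x k = 0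
    · simp [hx]
    have hvu := hratio k (mem_inter.2 ⟨hk, Finsupp.mem_support_iff.2 hx⟩)
    rw [div_le_iff₀ (abs_pos.2 (Finsupp.mem_support_iff.1 (hsupp hk)))] at hvu
    rw [← mul_assoc]
    exact mul_le_mul_of_nonneg_right hvu (abs_nonneg _)
  have hlq : ∑ k ∈ u.support, |x k| ^ q ≤ ∑ k ∈ x.support, |x k| ^ q :=
    calc ∑ k ∈ u.support, |x k| ^ q ≤ ∑ k ∈ u.support ∪ x.support, |x k| ^ q :=
          sum_le_sum_of_subset_of_nonneg subset_union_left fun _ _ _ => by positivity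
      _ = ∑ k ∈ x.support, |x k| ^ q := (sum_subset subset_union_right fun k _ hk => by
          rw [Finsupp.notMem_support_iff.1 hk, abs_zero, Real.zero_rpow hq.ne']).symm
  calc |v.sum fun k c => c * x k| ≤ ∑ k ∈ v.support, |v k| * |x k| :=
        (abs_sum_le_sum_abs _ _).trans_eq (sum_congr rfl fun k _ => abs_mul _ _)
    _ ≤ M * ∑ k ∈ u.support, |u k| * |x k| := by
        rw [mul_sum]
        exact (sum_le_sum hterm).trans
          (sum_le_sum_of_subset_of_nonneg hsupp fun _ _ _ => by positivity)
    _ ≤ M * (∑ k ∈ u.support, |x k| ^ q) ^ (1 / q) := by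
        gcongr
        exact hu _ fun k => abs_nonneg _
    _ ≤ (∑ k ∈ x.support, |x k| ^ q) ^ (1 / q) * M := by
        rw [mul_comm]
        gcongr

theorem stmt_11_general
    (q p : ℝ) (hq : 1 ≤ q) (hpq : 1 / p + 1 / q = 1)
    (nn : ℕ → ℕ) (θ : ℕ → ℝ) (hθ : ∀ j, 0 < θ j ∧ θ j ≤ 1)
    {T : Type*} [Fintype T] (root : T) (parent : T → Option T)
    (hroot : parent root = none)
    (hrooted : ∀ t : T, t = root ∨ Relation.TransGen (fun a b => parent b = some a) root t)
    (f g : T → ℕ →₀ ℝ) (jw : T → ℕ)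
    (hnode : ∀ t : T,
      (∃ (k : ℕ) (ε : ℝ), (ε = 1 ∨ ε = -1) ∧ f t = Finsupp.single k ε ∧ g t = f t ∧
        ∀ s : T, parent s ≠ some t) ∨
      ((∃ s : T, parent s = some t) ∧
        (Finset.univ.filter (fun s => parent s = some t)).card ≤ nn (jw t) ∧
        (∀ s ∈ Finset.univ.filter (fun s' => parent s' = some t),
          ∀ s' ∈ Finset.univ.filter (fun s'' => parent s'' = some t), s ≠ s' →
          (∀ i ∈ (f s).support, ∀ i' ∈ (f s').support, i < i') ∨
          (∀ i ∈ (f s).support, ∀ i' ∈ (f s').support, i' < i)) ∧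
        f t = ((θ (jw t) / (nn (jw t) : ℝ) ^ (1 / p)) •
          ∑ s ∈ Finset.univ.filter (fun s => parent s = some t), f s) ∧
        g t = (((nn (jw t) : ℝ) ^ (1 / p))⁻¹ •
          ∑ s ∈ Finset.univ.filter (fun s => parent s = some t), g s))) :
    ∀ (x : ℕ →₀ ℝ) (M : ℝ), 0 ≤ M →
      (∀ k ∈ (f root).support ∩ x.support, |(f root) k| / |(g root) k| ≤ M) →
      |(f root).sum fun k c => c * x k| ≤
        (∑ k ∈ x.support, |x k| ^ q) ^ (1 / q) * M := by
  have htree : ∀ t, (f t).support = (g t).support ∧ DualNormLeOne q (g t) := by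
    intro t
    induction t using (wellFounded_parent_eq_some_of_rooted hroot hrooted).induction with
    | _ t ih =>
      rcases hnode t with ⟨k, ε, hε, hf, hg, -⟩ | ⟨⟨s, hs⟩, hcard, hblock, hf, hg⟩
      · rw [hg, hf]
        refine ⟨rfl, dualNormLeOne_single (by linarith) k ?_⟩
        rcases hε with rfl | rfl <;> simp
      · have hn : 0 < nn (jw t) :=
          (card_pos.2 ⟨s, mem_filter.2 ⟨mem_univ s, hs⟩⟩).trans_le hcard
        have hdisj : (↑(univ.filter fun s => parent s = some t) : Set T).PairwiseDisjoint
            fun s => (f s).support := fun s hs s' hs' hne => disjoint_left.2 fun i hi hi' => by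
          rcases hblock s hs s' hs' hne with h | h <;> exact (h i hi i hi').false
        rw [hf, hg]
        exact support_eq_and_dualNormLeOne_smul_sum hq hpq
          (div_pos (hθ _).1 (Real.rpow_pos_of_pos (Nat.cast_pos.2 hn) _)).ne' hn hcard hdisj
          fun s hs => ih s (mem_filter.1 hs).2
  intro x M hM hratio
  exact abs_sum_mul_le_of_dualNormLeOne (by linarith) hM (htree root).1.subset (htree root).2
    hratio

/-- for `f` in the norming set of a `q`-mixed-Tsirelson space
with a tree-analysis `(f_t)` and associated functional `g_f = g_root`,
`|f(x)| ≤ ‖x‖_q · max { |f(e_k)|/|g_f(e_k)| : k ∈ supp f ∩ supp x }`. -/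
theorem stmt_11
    (q p : ℝ) (hq : 1 ≤ q) (hpq : 1 / p + 1 / q = 1)
    (nn : ℕ → ℕ) (θ : ℕ → ℝ) (hn : ∀ j, 0 < nn j) (hθ : ∀ j, 0 < θ j ∧ θ j ≤ 1)
    {T : Type*} [Fintype T] (root : T) (parent : T → Option T)
    (hroot : parent root = none)
    (hrooted : ∀ t : T, t = root ∨ Relation.TransGen (fun a b => parent b = some a) root t)
    (f g : T → ℕ →₀ ℝ) (jw : T → ℕ)
    (hnode : ∀ t : T,
      (∃ (k : ℕ) (ε : ℝ), (ε = 1 ∨ ε = -1) ∧ f t = Finsupp.single k ε ∧ g t = f t ∧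
        ∀ s : T, parent s ≠ some t) ∨
      ((∃ s : T, parent s = some t) ∧
        (Finset.univ.filter (fun s => parent s = some t)).card ≤ nn (jw t) ∧
        (∀ s ∈ Finset.univ.filter (fun s' => parent s' = some t),
          ∀ s' ∈ Finset.univ.filter (fun s'' => parent s'' = some t), s ≠ s' →
          (∀ i ∈ (f s).support, ∀ i' ∈ (f s').support, i < i') ∨
          (∀ i ∈ (f s).support, ∀ i' ∈ (f s').support, i' < i)) ∧
        f t = ((θ (jw t) / (nn (jw t) : ℝ) ^ (1 / p)) •
          ∑ s ∈ Finset.univ.filter (fun s => parent s = some t), f s) ∧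
        g t = (((nn (jw t) : ℝ) ^ (1 / p))⁻¹ •
          ∑ s ∈ Finset.univ.filter (fun s => parent s = some t), g s))) :
    ∀ (x : ℕ →₀ ℝ) (M : ℝ), 0 ≤ M →
      (∀ k ∈ (f root).support ∩ x.support, |(f root) k| / |(g root) k| ≤ M) →
      |(f root).sum fun k c => c * x k| ≤
        (∑ k ∈ x.support, |x k| ^ q) ^ (1 / q) * M :=
  stmt_11_general q p hq hpq nn θ hθ root parent hroot hrooted f g jw hnode
end

section
/- Let X be a Banach space with a monotone FDD E such that, for some q_0 ≥ 1 and θ_0 > 0, every E-block sequence (y_k)_{k=1}^n of vectors of norm at least one satisfies ‖∑_{k=1}^n y_k‖ ≥ θ_0 n^{1/q_0}. Then for Θ = (q_0 θ_0)^{-q_0/(q_0+1)} + (q_0/θ_0^{q_0})^{1/(q_0+1)} and r = (q_0+1)/q_0, every E-block sequence (f_k)_{k=1}^n of functionals in the unit ball of X* satisfies ‖∑_{k=1}^n f_k‖ ≤ Θ n^{1/r}. -/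
/-! For `‖x‖ = 1` and `δ > 0`, only few `k` have `‖f k x‖ > δ`: widening the supports of
these `f k` to consecutive intervals starting at `0` cuts `x` into blocks of norm `≥ δ` which
telescope to some `S N x`, of norm `≤ 1` by monotonicity, so the lower estimate allows at most
`(δθ₀)^{-q₀}` of them. The other terms contribute at most `nδ`, and
`δ = (q₀ / (θ₀^{q₀} n))^{1/(q₀+1)}` balances the two bounds. -/

open Filter Finset

theorem Fin.sum_succ_sub_castSucc {M : Type*} [AddCommGroup M] {m : ℕ} (g : Fin (m + 1) → M) :
    ∑ i : Fin m, (g i.succ - g i.castSucc) = g (Fin.last m) - g 0 := by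
  induction m with
  | zero => simp
  | succ m ih =>
    rw [Fin.sum_univ_castSucc]
    simp only [Fin.succ_castSucc]
    have := ih (fun j => g j.castSucc)
    simp only [Fin.castSucc_zero] at this
    rw [this, Fin.succ_last]
    abel

theorem right_end_le_left_end_of_lt {n : ℕ} {a b : Fin n → ℕ} (hab : ∀ k, a k < b k)
    (hba : ∀ (k : Fin n) (h : (k : ℕ) + 1 < n), b k ≤ a ⟨(k : ℕ) + 1, h⟩)
    {j j' : Fin n} (hjj' : j < j') : b j ≤ a j' := by
  obtain ⟨t, ht⟩ := j'
  rw [Fin.mk_lt_mk] at hjj'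
  induction t with
  | zero => omega
  | succ t ih =>
    rcases (Nat.lt_succ_iff.1 hjj').lt_or_eq with hj | rfl
    · exact (ih (by omega) hj).trans ((hab _).le.trans (hba ⟨t, _⟩ ht))
    · exact hba j ht

section Projections

variable {𝕜 X Y : Type*} [NontriviallyNormedField 𝕜] [NormedAddCommGroup X]
  [NormedSpace 𝕜 X] [NormedAddCommGroup Y] [NormedSpace 𝕜 Y] {S : ℕ → X →L[𝕜] X}

theorem sub_comp_sub_of_le (hS : ∀ m n, (S m).comp (S n) = S (min m n)) {p q p' q' : ℕ}
    (hp : p' ≤ p) (hpq : p ≤ q) (hq : q ≤ q') :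
    (S q - S p).comp (S q' - S p') = S q - S p := by
  simp only [ContinuousLinearMap.sub_comp, ContinuousLinearMap.comp_sub, hS,
    min_eq_left hq, min_eq_right (hp.trans hpq), min_eq_left (hpq.trans hq), min_eq_right hp]
  abel

theorem apply_sub_apply_of_le (hS : ∀ m n, (S m).comp (S n) = S (min m n)) {f : X →L[𝕜] Y}
    {a b c d : ℕ} (hf : f.comp (S b - S a) = f) (hca : c ≤ a) (hab : a ≤ b) (hbd : b ≤ d)
    (x : X) : f ((S d - S c) x) = f x := by
  have hfP : ∀ z, f ((S b - S a) z) = f z := fun z => DFunLike.congr_fun hf z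
  calc f ((S d - S c) x) = f (((S b - S a).comp (S d - S c)) x) := (hfP _).symm
    _ = f x := by rw [sub_comp_sub_of_le hS hca hab hbd, hfP]

end Projections

theorem le_rpow_neg_of_mul_rpow_le_inv {q θ δ t : ℝ} (hq : 0 < q) (hθ : 0 < θ) (hδ : 0 < δ)
    (ht : 0 ≤ t) (h : θ * t ^ (1 / q) ≤ δ⁻¹) : t ≤ (δ * θ) ^ (-q) := by
  have h' : t ^ (1 / q) ≤ (δ * θ)⁻¹ := by
    rw [mul_inv, ← div_eq_mul_inv, le_div_iff₀ hθ, mul_comm]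
    exact h
  calc t = (t ^ (1 / q)) ^ q := by
        rw [← Real.rpow_mul ht, one_div_mul_cancel hq.ne', Real.rpow_one]
    _ ≤ ((δ * θ)⁻¹) ^ q := by gcongr
    _ = (δ * θ) ^ (-q) := by rw [Real.inv_rpow (by positivity), Real.rpow_neg (by positivity)]

theorem exists_rpow_neg_add_mul_eq {q θ t : ℝ} (hq : 0 < q) (hθ : 0 < θ) (ht : 0 < t) :
    ∃ δ > 0, (δ * θ) ^ (-q) + t * δ =
      ((q * θ) ^ (-(q / (q + 1))) + (q / θ ^ q) ^ ((1 : ℝ) / (q + 1))) * t ^ (q / (q + 1)) := by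
  set δ := (q / (θ ^ q * t)) ^ ((1 : ℝ) / (q + 1)) with hδ_def
  have hδ0 : 0 < δ := by positivity
  have hθq : 0 < θ ^ q := by positivity
  have hlogδ : Real.log δ = (Real.log q - q * Real.log θ - Real.log t) / (q + 1) := by
    rw [hδ_def, Real.log_rpow (by positivity), Real.log_div hq.ne' (by positivity),
      Real.log_mul hθq.ne' ht.ne', Real.log_rpow hθ]
    ring
  clear_value δ
  refine ⟨δ, hδ0, ?_⟩
  rw [add_mul]
  congr 1
  · refine Real.log_injOn_pos (Set.mem_Ioi.2 (by positivity)) (Set.mem_Ioi.2 (by positivity)) ?_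
    rw [Real.log_rpow (by positivity), Real.log_mul hδ0.ne' hθ.ne',
      Real.log_mul (by positivity) (by positivity), Real.log_rpow (by positivity),
      Real.log_rpow ht, Real.log_mul hq.ne' hθ.ne', hlogδ]
    field_simp
    ring
  · refine Real.log_injOn_pos (Set.mem_Ioi.2 (by positivity)) (Set.mem_Ioi.2 (by positivity)) ?_
    rw [Real.log_mul ht.ne' hδ0.ne', Real.log_mul (by positivity) (by positivity),
      Real.log_rpow (by positivity), Real.log_rpow ht, Real.log_div hq.ne' hθq.ne',
      Real.log_rpow hθ, hlogδ]
    field_simp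
    ring

section LowerEstimate

variable {𝕜 X : Type*} [RCLike 𝕜] [NormedAddCommGroup X] [NormedSpace 𝕜 X]
  {S : ℕ → X →L[𝕜] X}

def LowerBlockEstimate (S : ℕ → X →L[𝕜] X) (θ q : ℝ) : Prop :=
  ∀ (n : ℕ) (y : Fin n → X) (a b : Fin n → ℕ),
    (∀ k, a k < b k) →
    (∀ (k : Fin n) (h : (k : ℕ) + 1 < n), b k ≤ a ⟨(k : ℕ) + 1, h⟩) →
    (∀ k, (S (b k) - S (a k)) (y k) = y k) →
    (∀ k, 1 ≤ ‖y k‖) →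
    θ * (n : ℝ) ^ (1 / q) ≤ ‖∑ k, y k‖

variable (hS0 : S 0 = 0) (hS : ∀ m n, (S m).comp (S n) = S (min m n))
  (hSle : ∀ n, ‖S n‖ ≤ 1) {θ q : ℝ} (hlow : LowerBlockEstimate S θ q)
  {n : ℕ} {f : Fin n → X →L[𝕜] 𝕜} {a b : Fin n → ℕ} (hab : ∀ k, a k < b k)
  (hba : ∀ (k : Fin n) (h : (k : ℕ) + 1 < n), b k ≤ a ⟨(k : ℕ) + 1, h⟩)
  (hf : ∀ k, (f k).comp (S (b k) - S (a k)) = f k) (hfle : ∀ k, ‖f k‖ ≤ 1)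
include hS0 hS hSle hlow hab hba hf hfle

theorem mul_rpow_le_inv_of_strictMono {m : ℕ} {K : Fin m → Fin n} (hK : StrictMono K) {δ : ℝ}
    (hδ : 0 < δ) {x : X} (hx : ‖x‖ ≤ 1) (hKx : ∀ i, δ < ‖f (K i) x‖) :
    θ * (m : ℝ) ^ (1 / q) ≤ δ⁻¹ := by
  set c : Fin (m + 1) → ℕ := Fin.cons 0 (fun i => b (K i)) with hc
  have hc_le : ∀ i, c i.castSucc ≤ a (K i) := by
    intro i
    rcases Fin.eq_zero_or_eq_succ i.castSucc with h | ⟨j, hj⟩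
    · rw [h, hc, Fin.cons_zero]
      exact Nat.zero_le _
    · rw [hj, hc, Fin.cons_succ]
      refine right_end_le_left_end_of_lt hab hba (hK ?_)
      have hval := congrArg Fin.val hj
      rw [Fin.val_castSucc, Fin.val_succ] at hval
      exact Fin.lt_def.2 (by omega)
  have hc_succ : ∀ i, c i.succ = b (K i) := fun i => Fin.cons_succ _ _ _
  set W : Fin m → X := fun i => (S (c i.succ) - S (c i.castSucc)) x
  have hfW : ∀ i, f (K i) (W i) = f (K i) x := fun i =>
    apply_sub_apply_of_le hS (hf _) (hc_le i) (hab _).le (hc_succ i).ge x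
  have hW : ∀ i, δ ≤ ‖W i‖ := fun i => calc
    δ ≤ ‖f (K i) (W i)‖ := by rw [hfW]; exact (hKx i).le
    _ ≤ ‖f (K i)‖ * ‖W i‖ := (f (K i)).le_opNorm _
    _ ≤ ‖W i‖ := mul_le_of_le_one_left (norm_nonneg _) (hfle _)
  have hsumW : ‖∑ i, W i‖ ≤ 1 := by
    have htel : ∑ i, W i = S (c (Fin.last m)) x - S (c 0) x :=
      Fin.sum_succ_sub_castSucc (fun j => S (c j) x)
    rw [htel, hc, Fin.cons_zero, hS0, zero_apply, sub_zero]
    exact (S _).le_of_opNorm_le (hSle _) x |>.trans (by simpa using hx)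
  have hnorm_smul : ∀ z : X, ‖(δ : 𝕜)⁻¹ • z‖ = δ⁻¹ * ‖z‖ := fun z => by
    rw [norm_smul, norm_inv, RCLike.norm_ofReal, abs_of_pos hδ]
  have hAB : ∀ i : Fin m, c i.castSucc < c i.succ := fun i =>
    (hc_le i).trans_lt ((hab _).trans_eq (hc_succ i).symm)
  have hWproj : ∀ i : Fin m, (S (c i.succ) - S (c i.castSucc)) (W i) = W i := fun i =>
    DFunLike.congr_fun (sub_comp_sub_of_le hS le_rfl (hAB i).le le_rfl) x
  calc θ * (m : ℝ) ^ (1 / q) ≤ ‖∑ i, (δ : 𝕜)⁻¹ • W i‖ := by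
        refine hlow m _ _ _ hAB (fun _ _ => le_rfl) (fun i => ?_) (fun i => ?_)
        · rw [map_smul, hWproj]
        · rw [hnorm_smul, le_inv_mul_iff₀ hδ, mul_one]
          exact hW i
    _ = δ⁻¹ * ‖∑ i, W i‖ := by rw [← Finset.smul_sum, hnorm_smul]
    _ ≤ δ⁻¹ := mul_le_of_le_one_right (inv_nonneg.2 hδ.le) hsumW

theorem norm_sum_le_rpow_neg_add_mul (hq : 0 < q) (hθ : 0 < θ) {δ : ℝ} (hδ : 0 < δ) :
    ‖∑ k, f k‖ ≤ (δ * θ) ^ (-q) + n * δ := by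
  refine ContinuousLinearMap.opNorm_le_of_unit_norm (by positivity) fun x hx => ?_
  have hcard : (#{k | δ < ‖f k x‖} : ℝ) ≤ (δ * θ) ^ (-q) :=
    le_rpow_neg_of_mul_rpow_le_inv hq hθ hδ (Nat.cast_nonneg _) <|
      mul_rpow_le_inv_of_strictMono hS0 hS hSle hlow hab hba hf hfle
        (OrderEmbedding.strictMono (orderEmbOfFin _ rfl)) hδ hx.le
        fun i => (mem_filter.1 (orderEmbOfFin_mem _ rfl i)).2
  have hterm : ∀ k, ‖f k x‖ ≤ (if δ < ‖f k x‖ then 1 else 0) + δ := fun k => by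
    split_ifs with h
    · linarith [(f k).le_of_opNorm_le (hfle k) x, hx]
    · linarith [not_lt.1 h]
  calc ‖(∑ k, f k) x‖ = ‖∑ k, f k x‖ := by rw [_root_.sum_apply]
    _ ≤ ∑ k, ‖f k x‖ := norm_sum_le _ _
    _ ≤ ∑ k, ((if δ < ‖f k x‖ then 1 else 0) + δ) := sum_le_sum fun k _ => hterm k
    _ = #{k | δ < ‖f k x‖} + n * δ := by
      rw [sum_add_distrib, sum_boole, sum_const, card_univ, Fintype.card_fin, nsmul_eq_mul]
    _ ≤ (δ * θ) ^ (-q) + n * δ := by gcongr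

end LowerEstimate

theorem stmt_17_general
    {X : Type*} [NormedAddCommGroup X] [NormedSpace ℂ X]
    (S : ℕ → X →L[ℂ] X) (hS0 : S 0 = 0)
    (hSmul : ∀ m n, (S m).comp (S n) = S (min m n))
    (hmono : ∀ n, ‖S n‖ ≤ 1)
    (q₀ θ₀ : ℝ) (hq₀ : 1 ≤ q₀) (hθ₀ : 0 < θ₀)
    (hlow : ∀ (n : ℕ) (y : Fin n → X) (a b : Fin n → ℕ),
      (∀ k, a k < b k) →
      (∀ (k : Fin n) (h : (k : ℕ) + 1 < n), b k ≤ a ⟨(k : ℕ) + 1, h⟩) →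
      (∀ k, (S (b k) - S (a k)) (y k) = y k) →
      (∀ k, 1 ≤ ‖y k‖) →
      θ₀ * (n : ℝ) ^ (1 / q₀) ≤ ‖∑ k, y k‖) :
    ∀ (n : ℕ) (f : Fin n → X →L[ℂ] ℂ) (a b : Fin n → ℕ),
      (∀ k, a k < b k) →
      (∀ (k : Fin n) (h : (k : ℕ) + 1 < n), b k ≤ a ⟨(k : ℕ) + 1, h⟩) →
      (∀ k, (f k).comp (S (b k) - S (a k)) = f k) →
      (∀ k, ‖f k‖ ≤ 1) →
      ‖∑ k, f k‖ ≤
        ((q₀ * θ₀) ^ (-(q₀ / (q₀ + 1))) + (q₀ / θ₀ ^ q₀) ^ ((1 : ℝ) / (q₀ + 1))) *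
          (n : ℝ) ^ (q₀ / (q₀ + 1)) := by
  intro n f a b hab hba hf hfle
  have hq₀' : 0 < q₀ := by linarith
  rcases n.eq_zero_or_pos with rfl | hn
  · simp only [univ_eq_empty, sum_empty, norm_zero]
    positivity
  obtain ⟨δ, hδ, hδ_eq⟩ := exists_rpow_neg_add_mul_eq hq₀' hθ₀ (Nat.cast_pos.2 hn)
  rw [← hδ_eq]
  exact norm_sum_le_rpow_neg_add_mul hS0 hSmul hmono hlow hab hba hf hfle hq₀' hθ₀ hδ

/-- a lower `θ₀ n^{1/q₀}`-estimate on `E`-block sequences of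
norm-one-or-larger vectors (monotone FDD) yields the upper estimate
`‖∑ f_k‖ ≤ Θ n^{1/r}` for `E`-block sequences of functionals in the unit ball,
where `Θ = (q₀θ₀)^{-q₀/(q₀+1)} + (q₀/θ₀^{q₀})^{1/(q₀+1)}` and `r = (q₀+1)/q₀`. -/
theorem stmt_17
    {X : Type*} [NormedAddCommGroup X] [NormedSpace ℂ X] [CompleteSpace X]
    (S : ℕ → X →L[ℂ] X) (hS0 : S 0 = 0)
    (hSmul : ∀ m n, (S m).comp (S n) = S (min m n))
    (hStend : ∀ x : X, Tendsto (fun n => S n x) atTop (nhds x))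
    (hmono : ∀ n, ‖S n‖ ≤ 1)
    (q₀ θ₀ : ℝ) (hq₀ : 1 ≤ q₀) (hθ₀ : 0 < θ₀)
    (hlow : ∀ (n : ℕ) (y : Fin n → X) (a b : Fin n → ℕ),
      (∀ k, a k < b k) →
      (∀ (k : Fin n) (h : (k : ℕ) + 1 < n), b k ≤ a ⟨(k : ℕ) + 1, h⟩) →
      (∀ k, (S (b k) - S (a k)) (y k) = y k) →
      (∀ k, 1 ≤ ‖y k‖) →
      θ₀ * (n : ℝ) ^ (1 / q₀) ≤ ‖∑ k, y k‖) :
    ∀ (n : ℕ) (f : Fin n → X →L[ℂ] ℂ) (a b : Fin n → ℕ),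
      (∀ k, a k < b k) →
      (∀ (k : Fin n) (h : (k : ℕ) + 1 < n), b k ≤ a ⟨(k : ℕ) + 1, h⟩) →
      (∀ k, (f k).comp (S (b k) - S (a k)) = f k) →
      (∀ k, ‖f k‖ ≤ 1) →
      ‖∑ k, f k‖ ≤
        ((q₀ * θ₀) ^ (-(q₀ / (q₀ + 1))) + (q₀ / θ₀ ^ q₀) ^ ((1 : ℝ) / (q₀ + 1))) *
          (n : ℝ) ^ (q₀ / (q₀ + 1)) :=
  stmt_17_general S hS0 hSmul hmono q₀ θ₀ hq₀ hθ₀ hlow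
end

section
/- Let 𝔛 be a Bourgain–Delbaen-C-ℒ_∞-space, (Γ^s)_{s=1}^∞ pairwise disjoint self-determined subsets of Γ each satisfying the interval condition (for every γ ∈ Γ there is an interval E with e*_γ ∘ I_{Γ^s} = e*_γ ∘ P_E), so that each coordinate projection I_s = I_{Γ^s} is bounded, the I_s are mutually annihilating, and the quotient condition ‖∑_{s=1}^N Q x_s‖ ≤ C max_s ‖x_s‖ holds for x_s ∈ 𝔛_s (Q the quotient by 𝔛_0 = ∩_s ker I_s). Then the sequence (I_s)_{s=1}^∞ is unconditional in L(𝔛): there is a constant D (one may take D = C · sup_s‖I_s‖) such that for scalars with |a_s| ≤ |b_s| for all s, ‖∑_{s=1}^N a_s I_s‖ ≤ D ‖∑_{s=1}^N b_s I_s‖. -/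
/-!
Given `x`, put `y = ∑ₛ (aₛ / bₛ) • Iₛ x`; since the `Iₛ` are mutually annihilating projections,
`(∑ₛ bₛ • Iₛ) y = (∑ₛ aₛ • Iₛ) x`. The operator `∑ₛ bₛ • Iₛ` vanishes on `X₀ = ⋂ₛ ker Iₛ`, so it
only sees the class of `y` modulo `X₀`, whose norm the quotient condition bounds by
`C · maxₛ ‖(aₛ / bₛ) • Iₛ x‖ ≤ C · A · ‖x‖`.
-/

open Metric

lemma exists_mul_eq_of_norm_le {𝕜 : Type*} [NormedDivisionRing 𝕜] {a b : 𝕜} (h : ‖a‖ ≤ ‖b‖) :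
    ∃ r : 𝕜, ‖r‖ ≤ 1 ∧ r * b = a := by
  rcases eq_or_ne b 0 with rfl | hb
  · exact ⟨0, by simp, by simpa [eq_comm] using h⟩
  · refine ⟨a * b⁻¹, ?_, inv_mul_cancel_right₀ hb a⟩
    rw [norm_mul, norm_inv]
    exact mul_inv_le_one_of_le₀ h (norm_nonneg b)

namespace ContinuousLinearMap

variable {𝕜 X Y : Type*} [NontriviallyNormedField 𝕜]
  [SeminormedAddCommGroup X] [NormedSpace 𝕜 X] [SeminormedAddCommGroup Y] [NormedSpace 𝕜 Y]

lemma norm_apply_le_opNorm_mul_infDist (T : X →L[𝕜] Y) {S : Set X} (hS : S.Nonempty)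
    (hT : ∀ z ∈ S, T z = 0) (w : X) : ‖T w‖ ≤ ‖T‖ * infDist w S := by
  have : Nonempty S := hS.to_subtype
  rw [infDist_eq_iInf, Real.mul_iInf_of_nonneg (norm_nonneg T)]
  refine le_ciInf fun ⟨z, hz⟩ => ?_
  calc ‖T w‖ = ‖T (w - z)‖ := by rw [map_sub, hT z hz, sub_zero]
    _ ≤ ‖T‖ * dist w z := by rw [dist_eq_norm]; exact T.le_opNorm _

variable {I : ℕ → X →L[𝕜] X}

lemma sum_smul_apply_of_orthogonal_projections (hproj : ∀ s, (I s).comp (I s) = I s)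
    (hann : ∀ s t, s ≠ t → (I s).comp (I t) = 0) {N : ℕ} (b : Fin N → 𝕜) (t : Fin N) (x : X) :
    (∑ s, b s • I s) (I t x) = b t • I t x := by
  rw [sum_apply, Finset.sum_eq_single t]
  · simp only [smul_apply, ← comp_apply, hproj]
  · intro s _ hst
    simp [← comp_apply, hann s t (Fin.val_injective.ne hst)]
  · simp

end ContinuousLinearMap

open ContinuousLinearMap in
/-- uniformly bounded mutually annihilating projections
satisfying the quotient condition form an unconditional sequence in `L(X)`,
with unconditionality constant `D = C·A`. -/
theorem stmt_19
    {X : Type*} [NormedAddCommGroup X] [NormedSpace ℂ X]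
    (I : ℕ → X →L[ℂ] X) (A C : ℝ)
    (hA : ∀ s, ‖I s‖ ≤ A)
    (hproj : ∀ s, (I s).comp (I s) = I s)
    (hann : ∀ s t, s ≠ t → (I s).comp (I t) = 0)
    (hQ : ∀ (N : ℕ) (x : Fin N → X), (∀ s : Fin N, I (s : ℕ) (x s) = x s) →
      ∀ M : ℝ, 0 ≤ M → (∀ s, ‖x s‖ ≤ M) →
        Metric.infDist (∑ s, x s) {z : X | ∀ s : ℕ, I s z = 0} ≤ C * M) :
    ∀ (N : ℕ) (a b : Fin N → ℂ), (∀ s, ‖a s‖ ≤ ‖b s‖) →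
      ‖∑ s, a s • I (s : ℕ)‖ ≤ C * A * ‖∑ s, b s • I (s : ℕ)‖ := by
  intro N a b hab
  set X₀ : Set X := {z | ∀ s : ℕ, I s z = 0}
  have hX₀ : (0 : X) ∈ X₀ := fun s => map_zero _
  have hA₀ : 0 ≤ A := (norm_nonneg _).trans (hA 0)
  have hC₀ : 0 ≤ C := by
    simpa [infDist_zero_of_mem hX₀] using hQ 0 Fin.elim0 (fun s => s.elim0) 1 zero_le_one (fun s => s.elim0)
  choose r hr1 hrb using fun s => exists_mul_eq_of_norm_le (hab s)
  refine opNorm_le_bound _ (by positivity) fun x => ?_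
  have hy : (∑ s, b s • I s) (∑ s, r s • I s x) = (∑ s, a s • I s) x := by
    simp only [map_sum, map_smul, sum_smul_apply_of_orthogonal_projections hproj hann, smul_smul,
      hrb, sum_apply, smul_apply]
  have hyQ : infDist (∑ s, r s • I s x) X₀ ≤ C * (A * ‖x‖) := by
    refine hQ N _ (fun s => ?_) _ (by positivity) fun s => ?_
    · rw [map_smul, ← comp_apply, hproj]
    · rw [norm_smul, ← one_mul (A * ‖x‖)]
      exact mul_le_mul (hr1 s) ((I s).le_of_opNorm_le (hA s) x) (norm_nonneg _) zero_le_one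
  calc ‖(∑ s, a s • I s) x‖ ≤ ‖∑ s, b s • I s‖ * infDist (∑ s, r s • I s x) X₀ := by
        rw [← hy]
        exact norm_apply_le_opNorm_mul_infDist _ ⟨0, hX₀⟩ (fun z hz => by simp [hz.out]) _
    _ ≤ ‖∑ s, b s • I s‖ * (C * (A * ‖x‖)) := by gcongr
    _ = C * A * ‖∑ s, b s • I s‖ * ‖x‖ := by ring
end
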